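/- arXiv:math/0412043 — 6 statements merged into one kernel-verified Lean document; each statement's English description precedes it below -/
import Mathlib

section
/- For every nonnegative integer l, 2^(2l) = sum over nonnegative integers p, q with p+q=l of binomial(2p,p)*binomial(2q,q). -/
open Polynomial Finset

lemma desc_half (n : ℕ) : (descPochhammer ℤ n).smeval (-(2⁻¹):ℚ) =
    (-1)^n * (2*n).factorial / (4^n * n.factorial) := by
  induction n with
  | zero => simp
  | succ n ih =>
    rw [descPochhammer_succ_right, smeval_mul, ih, smeval_sub, smeval_X, smeval_natCast]
    simp only [nsmul_eq_mul, pow_zero, mul_one, pow_one]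
    have h1 : (2*(n+1)).factorial = (2*n+2) * ((2*n+1) * (2*n).factorial) := by
      have : 2*(n+1) = (2*n+1) + 1 := by ring
      rw [this, Nat.factorial_succ, Nat.factorial_succ]
    have h2 : (n+1).factorial = (n+1) * n.factorial := Nat.factorial_succ n
    have hne : ((4:ℚ)^n * n.factorial) ≠ 0 := by positivity
    rw [h1, h2]
    push_cast
    field_simp
    ring

lemma ring_choose_half (n : ℕ) : Ring.choose (-(2⁻¹):ℚ) n =
    (-1)^n * (2*n).choose n / 4^n := by
  have h := Ring.descPochhammer_eq_factorial_smul_choose (-(2⁻¹):ℚ) n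
  rw [desc_half] at h
  have hfac : ((2*n).choose n : ℚ) * (n.factorial * n.factorial) = (2*n).factorial := by
    have := Nat.choose_mul_factorial_mul_factorial (Nat.le_mul_of_pos_left n two_pos)
    have h2 : 2*n - n = n := by omega
    rw [h2] at this
    exact_mod_cast congrArg (Nat.cast (R := ℚ)) (by rw [← this]; ring)
  have hne : (n.factorial : ℚ) ≠ 0 := by positivity
  have h4 : ((4:ℚ)^n) ≠ 0 := by positivity
  rw [nsmul_eq_mul, ← hfac, div_eq_iff (mul_ne_zero h4 hne)] at h
  rw [eq_div_iff h4]
  apply mul_right_cancel₀ (mul_ne_zero hne hne)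
  linear_combination -h

lemma desc_neg_one (n : ℕ) : (descPochhammer ℤ n).smeval (-1:ℚ) =
    (-1)^n * n.factorial := by
  induction n with
  | zero => simp
  | succ n ih =>
    rw [descPochhammer_succ_right, smeval_mul, ih, smeval_sub, smeval_X, smeval_natCast]
    simp only [nsmul_eq_mul, pow_zero, mul_one, pow_one]
    rw [Nat.factorial_succ]
    push_cast
    ring

lemma ring_choose_neg_one (n : ℕ) : Ring.choose (-1:ℚ) n = (-1)^n := by
  have h := Ring.descPochhammer_eq_factorial_smul_choose (-1:ℚ) n
  rw [desc_neg_one, nsmul_eq_mul] at h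
  have hne : (n.factorial : ℚ) ≠ 0 := by positivity
  have h2 : (n.factorial:ℚ) * Ring.choose (-1:ℚ) n = n.factorial * (-1)^n := by
    rw [← h]; ring
  exact mul_left_cancel₀ hne h2

/-- **Cauchy identity for central binomial coefficients.**
For every nonnegative integer `l`,
`2^(2l) = ∑_{p+q=l} C(2p,p) * C(2q,q)`. -/
theorem cauchy_identity (l : ℕ) :
    2 ^ (2 * l) =
      ∑ pq ∈ Finset.HasAntidiagonal.antidiagonal l,
        (2 * pq.1).choose pq.1 * (2 * pq.2).choose pq.2 := by
  have key := Ring.add_choose_eq (R := ℚ) (r := -(2⁻¹)) (s := -(2⁻¹)) l (Commute.all _ _)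
  have hsum : (-(2⁻¹:ℚ)) + -(2⁻¹) = -1 := by norm_num
  rw [hsum, ring_choose_neg_one] at key
  have hterm : ∀ pq ∈ Finset.HasAntidiagonal.antidiagonal l,
      Ring.choose (-(2⁻¹):ℚ) pq.1 * Ring.choose (-(2⁻¹):ℚ) pq.2 =
      (-1)^l / 4^l * ((2*pq.1).choose pq.1 * (2*pq.2).choose pq.2) := by
    intro pq hpq
    have hl : pq.1 + pq.2 = l := Finset.HasAntidiagonal.mem_antidiagonal.mp hpq
    rw [ring_choose_half, ring_choose_half, ← hl]
    rw [pow_add, pow_add]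
    field_simp
  rw [Finset.sum_congr rfl hterm, ← Finset.mul_sum] at key
  have h4 : ((4:ℚ)^l) ≠ 0 := by positivity
  have key2 : (∑ pq ∈ Finset.HasAntidiagonal.antidiagonal l,
      ((2*pq.1).choose pq.1 * (2*pq.2).choose pq.2 : ℚ)) = 4^l := by
    have hneg : ((-1:ℚ)^l) ≠ 0 := pow_ne_zero _ (by norm_num)
    rw [div_mul_eq_mul_div, eq_div_iff h4] at key
    exact (mul_left_cancel₀ hneg key).symm
  have : ((2:ℚ)) ^ (2*l) = 4^l := by
    rw [pow_mul]; norm_num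
  have final : ((2 ^ (2*l) : ℕ) : ℚ) =
      ((∑ pq ∈ Finset.HasAntidiagonal.antidiagonal l,
        (2*pq.1).choose pq.1 * (2*pq.2).choose pq.2 : ℕ) : ℚ) := by
    push_cast
    rw [key2, ← this]
  exact_mod_cast final
end

section
/- The Pitman transform, sending a sequence (t_1,...,t_{2q}) with values in {-1,1} and total sum 0 to the sequence (z_i) determined by the piecewise-linear path Z_s = T_s - 2·inf_{0 ≤ r ≤ s} T_r (where T is the path of partial sums of (t_i)), is a bijection onto the set of sequences (z_1,...,z_{2q}) with values in {-1,1} whose partial sums are all nonnegative. -/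
open Finset

/-- Partial sum `t_1 + ⋯ + t_k` of a sequence `t : Fin q → ℤ`. -/
def psum (q : ℕ) (t : Fin q → ℤ) (k : ℕ) : ℤ :=
  ∑ i ∈ univ.filter (fun i : Fin q => (i : ℕ) < k), t i

/-- Running minimum `min_{0 ≤ r ≤ k} T_r` of the partial sums. -/
def minsum (q : ℕ) (t : Fin q → ℤ) (k : ℕ) : ℤ :=
  (Finset.range (k + 1)).inf' (Finset.nonempty_range_iff.mpr (Nat.succ_ne_zero k))
    (fun r => psum q t r)

/-- The (discrete) Pitman transform: it sends a sequence `t` to the increment sequence of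
the path `Z_k = T_k - 2 · min_{0 ≤ r ≤ k} T_r`, where `T` is the path of partial sums. -/
def pitman (q : ℕ) (t : Fin q → ℤ) : Fin q → ℤ := fun i =>
  (psum q t ((i : ℕ) + 1) - 2 * minsum q t ((i : ℕ) + 1)) -
    (psum q t (i : ℕ) - 2 * minsum q t (i : ℕ))

/-! ### Auxiliary definitions and lemmas -/

/-- Future minimum `min_{k ≤ r ≤ q} Z_r` of partial sums. -/
def fmin (q : ℕ) (z : Fin q → ℤ) (k : ℕ) : ℤ :=
  (Finset.Icc (min k q) q).inf' (Finset.nonempty_Icc.mpr (min_le_right k q))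
    (fun r => psum q z r)

/-- Explicit inverse of the Pitman transform. -/
def pinv (q : ℕ) (z : Fin q → ℤ) : Fin q → ℤ := fun i =>
  (psum q z ((i : ℕ) + 1) - 2 * min (fmin q z ((i : ℕ) + 1)) (psum q z q / 2)) -
    (psum q z (i : ℕ) - 2 * min (fmin q z (i : ℕ)) (psum q z q / 2))

namespace PitmanAux

variable {q : ℕ}

theorem psum_zero (t : Fin q → ℤ) : psum q t 0 = 0 := by
  simp [psum]

theorem psum_succ (t : Fin q → ℤ) {k : ℕ} (h : k < q) :
    psum q t (k + 1) = psum q t k + t ⟨k, h⟩ := by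
  have hins : univ.filter (fun i : Fin q => (i : ℕ) < k + 1) =
      insert ⟨k, h⟩ (univ.filter (fun i : Fin q => (i : ℕ) < k)) := by
    ext i
    simp only [mem_filter, mem_univ, true_and, mem_insert, Fin.ext_iff]
    omega
  rw [psum, hins, Finset.sum_insert (by simp), psum, add_comm]

theorem psum_ge (t : Fin q → ℤ) {k : ℕ} (h : q ≤ k) : psum q t k = psum q t q := by
  unfold psum
  apply Finset.sum_congr _ (fun _ _ => rfl)
  ext i
  have := i.isLt
  simp only [mem_filter, mem_univ, true_and]
  omega

theorem psum_top (t : Fin q → ℤ) : psum q t q = ∑ i, t i := by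
  unfold psum
  apply Finset.sum_congr _ (fun _ _ => rfl)
  ext i
  simp [i.isLt]

theorem minsum_zero (t : Fin q → ℤ) : minsum q t 0 = 0 := by
  simp [minsum, psum_zero]

theorem minsum_le_psum (t : Fin q → ℤ) {r k : ℕ} (h : r ≤ k) :
    minsum q t k ≤ psum q t r :=
  Finset.inf'_le _ (by simp; omega)

theorem minsum_succ (t : Fin q → ℤ) (k : ℕ) :
    minsum q t (k + 1) = min (minsum q t k) (psum q t (k + 1)) := by
  apply le_antisymm
  · exact le_min (Finset.le_inf' _ _ fun r hr => minsum_le_psum t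
      (by simp at hr; omega)) (minsum_le_psum t (le_refl (k + 1)))
  · apply Finset.le_inf'
    intro r hr
    simp only [Finset.mem_range] at hr
    rcases Nat.lt_succ_iff_lt_or_eq.mp hr with h | h
    · exact (min_le_left _ _).trans (minsum_le_psum t (by omega))
    · rw [h]; exact min_le_right _ _

theorem minsum_ge (t : Fin q → ℤ) {k : ℕ} (h : q ≤ k) : minsum q t k = minsum q t q := by
  induction k, h using Nat.le_induction with
  | base => rfl
  | succ n hn ih =>
    rw [minsum_succ, ih, psum_ge t (by omega)]
    exact min_eq_left (minsum_le_psum t (le_refl q))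

theorem psum_pitman (t : Fin q → ℤ) : ∀ k,
    psum q (pitman q t) k = psum q t k - 2 * minsum q t k := by
  intro k
  induction k with
  | zero => simp [psum_zero, minsum_zero]
  | succ n ih =>
    by_cases h : n < q
    · rw [psum_succ _ h, ih]
      simp only [pitman]
      ring
    · have h1 : psum q (pitman q t) (n + 1) = psum q (pitman q t) n := by
        rw [psum_ge _ (by omega), psum_ge _ (show q ≤ n by omega)]
      rw [h1, ih, psum_ge t (show q ≤ n + 1 by omega), psum_ge t (show q ≤ n by omega),
        minsum_ge t (show q ≤ n + 1 by omega), minsum_ge t (show q ≤ n by omega)]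

theorem fmin_le (z : Fin q → ℤ) {k r : ℕ} (hkr : k ≤ r) (hr : r ≤ q) :
    fmin q z k ≤ psum q z r :=
  Finset.inf'_le _ (Finset.mem_Icc.mpr ⟨by omega, hr⟩)

theorem le_fmin (z : Fin q → ℤ) {k : ℕ} {a : ℤ} (hk : k ≤ q)
    (h : ∀ r, k ≤ r → r ≤ q → a ≤ psum q z r) : a ≤ fmin q z k := by
  apply Finset.le_inf'
  intro r hr
  simp only [Finset.mem_Icc] at hr
  exact h r (by omega) hr.2

theorem fmin_self (z : Fin q → ℤ) : fmin q z q = psum q z q := by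
  apply le_antisymm (fmin_le z le_rfl le_rfl)
  apply le_fmin z le_rfl
  intro r h1 h2
  have : r = q := by omega
  rw [this]

theorem fmin_rec (z : Fin q → ℤ) {k : ℕ} (h : k < q) :
    fmin q z k = min (psum q z k) (fmin q z (k + 1)) := by
  apply le_antisymm
  · exact le_min (fmin_le z le_rfl (by omega))
      (le_fmin z (by omega) fun r h1 h2 => fmin_le z (by omega) h2)
  · apply le_fmin z (by omega)
    intro r h1 h2
    rcases eq_or_lt_of_le h1 with h3 | h3
    · rw [← h3]; exact min_le_left _ _
    · exact (min_le_right _ _).trans (fmin_le z (by omega) h2)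

/-- Key lemma (forward direction): the future minimum of the Pitman path, capped at its
final half-value, recovers the running minimum of the original bridge. -/
theorem lemA (t : Fin q → ℤ) (hpm : ∀ i, t i = 1 ∨ t i = -1)
    (hsum : psum q t q = 0) :
    ∀ d k, k + d = q →
      min (fmin q (pitman q t) k) (-minsum q t q) = -minsum q t k := by
  intro d
  induction d with
  | zero =>
    intro k hk
    have hkq : k = q := by omega
    rw [hkq, fmin_self, psum_pitman t q]
    have h1 := minsum_le_psum t (Nat.zero_le q)
    rw [psum_zero] at h1
    omega
  | succ n ih =>
    intro k hk
    have hkq : k < q := by omega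
    rw [fmin_rec _ hkq, min_assoc, ih (k + 1) (by omega), psum_pitman t k,
      minsum_succ t k]
    have hps := psum_succ t hkq
    have hm := minsum_le_psum t (le_refl k)
    rcases hpm ⟨k, hkq⟩ with h1 | h1 <;> omega

section Backward

variable (z : Fin q → ℤ) (c : ℤ)

theorem hM_eq (h2c : psum q z q = 2 * c) : psum q z q / 2 = c := by
  rw [h2c]
  exact Int.mul_ediv_cancel_left _ two_ne_zero

theorem mu_zero (hz0 : ∀ k : ℕ, 0 ≤ psum q z k) (hc : 0 ≤ c) :
    min (fmin q z 0) c = 0 := by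
  have h1 : fmin q z 0 ≤ 0 := by
    have := fmin_le z (le_refl 0) (Nat.zero_le q)
    rwa [psum_zero] at this
  have h2 : (0 : ℤ) ≤ fmin q z 0 := le_fmin z (Nat.zero_le q) fun r _ _ => hz0 r
  omega

theorem psum_pinv (hz0 : ∀ k : ℕ, 0 ≤ psum q z k) (hc : 0 ≤ c)
    (h2c : psum q z q = 2 * c) :
    ∀ k, k ≤ q → psum q (pinv q z) k = psum q z k - 2 * min (fmin q z k) c := by
  intro k
  induction k with
  | zero =>
    intro _
    rw [psum_zero, psum_zero, mu_zero z c hz0 hc]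
    ring
  | succ n ih =>
    intro hn
    have hnq : n < q := by omega
    rw [psum_succ _ hnq, ih (by omega)]
    simp only [pinv, hM_eq z c h2c]
    ring

theorem pinv_val (hz1 : ∀ i, z i = 1 ∨ z i = -1) (h2c : psum q z q = 2 * c)
    (i : Fin q) : pinv q z i = 1 ∨ pinv q z i = -1 := by
  have hk : (i : ℕ) < q := i.isLt
  have hps : psum q z ((i : ℕ) + 1) = psum q z (i : ℕ) + z i := by
    rw [psum_succ z hk]
  have hrec := fmin_rec z hk
  have hle := fmin_le z (le_refl ((i : ℕ) + 1)) hk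
  simp only [pinv, hM_eq z c h2c]
  rcases hz1 i with h | h <;> omega

theorem pinv_sum (hz0 : ∀ k : ℕ, 0 ≤ psum q z k) (hc : 0 ≤ c)
    (h2c : psum q z q = 2 * c) : ∑ i, pinv q z i = 0 := by
  rw [← psum_top, psum_pinv z c hz0 hc h2c q le_rfl, fmin_self, h2c]
  omega

theorem minsum_pinv (hz1 : ∀ i, z i = 1 ∨ z i = -1)
    (hz0 : ∀ k : ℕ, 0 ≤ psum q z k) (hc : 0 ≤ c) (h2c : psum q z q = 2 * c) :
    ∀ k, k ≤ q → minsum q (pinv q z) k = -min (fmin q z k) c := by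
  intro k
  induction k with
  | zero =>
    intro _
    rw [minsum_zero, mu_zero z c hz0 hc]
    omega
  | succ n ih =>
    intro hn
    have hnq : n < q := by omega
    rw [minsum_succ, ih (by omega), psum_pinv z c hz0 hc h2c (n + 1) hn]
    have hrec := fmin_rec z hnq
    have hle := fmin_le z (le_refl (n + 1)) hn
    have hps := psum_succ z hnq
    rcases hz1 ⟨n, hnq⟩ with h | h <;> omega

theorem pitman_pinv (hz1 : ∀ i, z i = 1 ∨ z i = -1)
    (hz0 : ∀ k : ℕ, 0 ≤ psum q z k) (hc : 0 ≤ c) (h2c : psum q z q = 2 * c)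
    (i : Fin q) : pitman q (pinv q z) i = z i := by
  have hk : (i : ℕ) < q := i.isLt
  have hps : psum q z ((i : ℕ) + 1) = psum q z (i : ℕ) + z i := by
    rw [psum_succ z hk]
  simp only [pitman]
  rw [psum_pinv z c hz0 hc h2c ((i : ℕ) + 1) hk,
    psum_pinv z c hz0 hc h2c (i : ℕ) (by omega),
    minsum_pinv z c hz1 hz0 hc h2c ((i : ℕ) + 1) hk,
    minsum_pinv z c hz1 hz0 hc h2c (i : ℕ) (by omega)]
  omega

end Backward

theorem pitman_val (t : Fin q → ℤ) (hpm : ∀ i, t i = 1 ∨ t i = -1) (i : Fin q) :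
    pitman q t i = 1 ∨ pitman q t i = -1 := by
  have hk : (i : ℕ) < q := i.isLt
  have hps : psum q t ((i : ℕ) + 1) = psum q t (i : ℕ) + t i := by
    rw [psum_succ t hk]
  simp only [pitman]
  rw [minsum_succ t (i : ℕ)]
  have hm := minsum_le_psum t (le_refl (i : ℕ))
  rcases hpm i with h | h <;> omega

theorem pitman_nonneg (t : Fin q → ℤ) (k : ℕ) : 0 ≤ psum q (pitman q t) k := by
  rw [psum_pitman]
  have h1 := minsum_le_psum t (Nat.zero_le k)
  rw [psum_zero] at h1
  have h2 := minsum_le_psum t (le_refl k)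
  omega

theorem pinv_pitman (t : Fin q → ℤ) (hpm : ∀ i, t i = 1 ∨ t i = -1)
    (hsum : psum q t q = 0) (i : Fin q) : pinv q (pitman q t) i = t i := by
  have hk : (i : ℕ) < q := i.isLt
  have hMz : psum q (pitman q t) q / 2 = -minsum q t q := by
    rw [psum_pitman t q, hsum, show (0 : ℤ) - 2 * minsum q t q =
      2 * (-minsum q t q) by ring]
    exact Int.mul_ediv_cancel_left _ two_ne_zero
  have hps : psum q t ((i : ℕ) + 1) = psum q t (i : ℕ) + t i := by
    rw [psum_succ t hk]
  simp only [pinv]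
  rw [hMz, psum_pitman t ((i : ℕ) + 1), psum_pitman t (i : ℕ),
    lemA t hpm hsum (q - ((i : ℕ) + 1)) ((i : ℕ) + 1) (by omega),
    lemA t hpm hsum (q - (i : ℕ)) (i : ℕ) (by omega)]
  omega

theorem psum_even (z : Fin q → ℤ) (hz1 : ∀ i, z i = 1 ∨ z i = -1) :
    ∀ k, k ≤ q → ∃ c : ℤ, psum q z k + k = 2 * c := by
  intro k
  induction k with
  | zero => exact fun _ => ⟨0, by simp [psum_zero]⟩
  | succ n ih =>
    intro hn
    have hnq : n < q := by omega
    obtain ⟨c, hc⟩ := ih (by omega)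
    have hps := psum_succ z hnq
    rcases hz1 ⟨n, hnq⟩ with h | h
    · exact ⟨c + 1, by rw [hps]; push_cast; omega⟩
    · exact ⟨c, by rw [hps]; push_cast; omega⟩

end PitmanAux

open PitmanAux

/-- The Pitman transform is a bijection from the set of `±1`-sequences of length `2q` with
total sum `0` onto the set of `±1`-sequences of length `2q` all of whose partial sums are
nonnegative. -/
theorem pitman_bijOn (q : ℕ) :
    Set.BijOn (pitman (2 * q))
      {t | (∀ i, t i = 1 ∨ t i = -1) ∧ ∑ i, t i = 0}
      {z | (∀ i, z i = 1 ∨ z i = -1) ∧ ∀ k : ℕ, 0 ≤ psum (2 * q) z k} := by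
  have hget : ∀ z : Fin (2 * q) → ℤ, (∀ i, z i = 1 ∨ z i = -1) →
      (∀ k : ℕ, 0 ≤ psum (2 * q) z k) →
      ∃ c : ℤ, 0 ≤ c ∧ psum (2 * q) z (2 * q) = 2 * c := by
    intro z hz1 hz0
    obtain ⟨c, hc⟩ := psum_even z hz1 (2 * q) le_rfl
    refine ⟨c - q, ?_, by push_cast at hc ⊢; omega⟩
    have := hz0 (2 * q)
    omega
  refine Set.InvOn.bijOn (f' := pinv (2 * q)) ⟨?_, ?_⟩ ?_ ?_
  · intro t ht
    obtain ⟨h1, h2⟩ := ht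
    have hsum : psum (2 * q) t (2 * q) = 0 := by rw [psum_top]; exact h2
    funext i
    exact pinv_pitman t h1 hsum i
  · intro z hz
    obtain ⟨hz1, hz0⟩ := hz
    obtain ⟨c, hc, h2c⟩ := hget z hz1 hz0
    funext i
    exact pitman_pinv z c hz1 hz0 hc h2c i
  · intro t ht
    obtain ⟨h1, _⟩ := ht
    exact ⟨pitman_val t h1, fun k => pitman_nonneg t k⟩
  · intro z hz
    obtain ⟨hz1, hz0⟩ := hz
    obtain ⟨c, hc, h2c⟩ := hget z hz1 hz0
    exact ⟨pinv_val z c hz1 h2c, pinv_sum z c hz0 hc h2c⟩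
end

section
/- Every number of sequences (a_1,...,a_{L}) with a_i ∈ {1,...,m}, where L = ml+1, such that for each 1 ≤ n ≤ m-1 at most nl elements of the sequence belong to {1,...,n}, equals m^{ml}. -/
open Finset
open Fin.NatCast

/-- Cycle lemma: if `F (n + m) = F n + 1` for all `n`, there is a unique starting point
`t < m` from which all proper "window increments" are nonpositive. -/
lemma parking_cycle_lemma (m : ℕ) (hm : 1 ≤ m) (F : ℕ → ℤ)
    (hF : ∀ n, F (n + m) = F n + 1) :
    ∃! t, t < m ∧ ∀ n, 1 ≤ n → n < m → F (t + n) ≤ F t := by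
  classical
  have hex : ∃ t, t < m ∧ ∀ j, j < m → F j ≤ F t := by
    obtain ⟨t, ht, hmax⟩ := Finset.exists_max_image (Finset.range m) F
      ⟨0, Finset.mem_range.2 (by omega)⟩
    exact ⟨t, Finset.mem_range.1 ht, fun j hj => hmax j (Finset.mem_range.2 hj)⟩
  set t := Nat.find hex with htdef
  obtain ⟨htm, hmax⟩ := Nat.find_spec hex
  have hstrict : ∀ j, j < t → F j < F t := by
    intro j hj
    have h1 := Nat.find_min hex hj
    push_neg at h1
    obtain ⟨j', hj', hlt⟩ := h1 (lt_trans hj htm)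
    exact lt_of_lt_of_le hlt (hmax j' hj')
  have hprop : ∀ n, 1 ≤ n → n < m → F (t + n) ≤ F t := by
    intro n hn1 hnm
    by_cases h : t + n < m
    · exact hmax _ h
    · have hj : t + n - m < t := by omega
      have h2 : F (t + n) = F (t + n - m) + 1 := by
        have h3 := hF (t + n - m)
        rw [show t + n - m + m = t + n by omega] at h3
        omega
      have h4 := hstrict _ hj
      omega
  have key : ∀ u v, (u < m ∧ ∀ n, 1 ≤ n → n < m → F (u + n) ≤ F u) →
      (v < m ∧ ∀ n, 1 ≤ n → n < m → F (v + n) ≤ F v) → u < v → False := by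
    rintro u v ⟨hum, hu⟩ ⟨hvm, hv⟩ huv
    have h1 : F v ≤ F u := by
      have := hu (v - u) (by omega) (by omega)
      rwa [show u + (v - u) = v by omega] at this
    have h2 : F (u + m) ≤ F v := by
      have := hv (m - (v - u)) (by omega) (by omega)
      rwa [show v + (m - (v - u)) = u + m by omega] at this
    have := hF u
    omega
  refine ⟨t, ⟨htm, hprop⟩, fun t' ht' => ?_⟩
  rcases lt_trichotomy t' t with h | h | h
  · exact (key t' t ht' ⟨htm, hprop⟩ h).elim
  · exact h
  · exact (key t t' ⟨htm, hprop⟩ ht' h).elim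

section Counting

variable {m L : ℕ} [NeZero m]

/-- number of entries of `a` equal to `j` mod `m`. -/
def parkingCf (a : Fin L → Fin m) (j : ℕ) : ℕ :=
  (univ.filter (fun k => a k = (j : Fin m))).card

/-- cumulative counts. -/
def parkingSf (a : Fin L → Fin m) (n : ℕ) : ℕ :=
  ∑ j ∈ Finset.range n, parkingCf a j

lemma parking_count_shift (a : Fin L → Fin m) (t n : ℕ) (hn : n ≤ m) :
    (univ.filter (fun k => ((a k - (t : Fin m)) : Fin m).val < n)).card
      = ∑ i ∈ Finset.range n, parkingCf a (t + i) := by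
  classical
  rw [Finset.card_eq_sum_card_fiberwise
    (f := a) (s := univ.filter (fun k => ((a k - (t : Fin m)) : Fin m).val < n))
    (t := univ.filter (fun b : Fin m => ((b - (t : Fin m)) : Fin m).val < n))
    (by intro x hx; simp only [mem_coe, mem_filter, mem_univ, true_and] at hx ⊢; exact hx)]
  have h2 : ∀ b ∈ univ.filter (fun b : Fin m => ((b - (t : Fin m)) : Fin m).val < n),
      ((univ.filter (fun k => ((a k - (t : Fin m)) : Fin m).val < n)).filter
          (fun k => a k = b)).card
        = (univ.filter (fun k => a k = b)).card := by
    intro b hb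
    simp only [mem_filter, mem_univ, true_and] at hb
    congr 1
    rw [Finset.filter_filter]
    apply Finset.filter_congr
    intro k _
    constructor
    · exact fun h => h.2
    · intro h; exact ⟨by rw [h]; exact hb, h⟩
  rw [Finset.sum_congr rfl h2]
  have hcast1 : ∀ b : Fin m, ((t + ((b - (t : Fin m)) : Fin m).val : ℕ) : Fin m) = b := by
    intro b
    rw [Nat.cast_add, Fin.cast_val_eq_self, add_comm, sub_add_cancel]
  have hcast2 : ∀ i, i < m → ((((t + i : ℕ) : Fin m) - (t : Fin m)) : Fin m).val = i := by
    intro i hi'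
    rw [Nat.cast_add, add_comm ((t : Fin m)) _, add_sub_cancel_right,
      Fin.val_cast_of_lt hi']
  refine Finset.sum_nbij' (fun b => ((b - (t : Fin m)) : Fin m).val)
    (fun i => ((t + i : ℕ) : Fin m)) ?_ ?_ ?_ ?_ ?_
  · intro b hb
    simp only [mem_filter, mem_univ, true_and] at hb
    exact Finset.mem_range.2 hb
  · intro i hi
    have hi' : i < m := lt_of_lt_of_le (Finset.mem_range.1 hi) hn
    simp only [mem_filter, mem_univ, true_and]
    rw [hcast2 i hi']
    exact Finset.mem_range.1 hi
  · intro b _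
    exact hcast1 b
  · intro i hi
    exact hcast2 i (lt_of_lt_of_le (Finset.mem_range.1 hi) hn)
  · intro b _
    unfold parkingCf
    rw [hcast1 b]

lemma parking_sum_period (a : Fin L → Fin m) (u : ℕ) :
    ∑ i ∈ Finset.range m, parkingCf a (u + i) = L := by
  rw [← parking_count_shift a u m le_rfl]
  have h : univ.filter (fun k : Fin L => ((a k - (u : Fin m)) : Fin m).val < m) = univ := by
    apply Finset.filter_true_of_mem
    intro k _
    exact (a k - (u : Fin m)).isLt
  rw [h, Finset.card_univ, Fintype.card_fin]

lemma parkingSf_add (a : Fin L → Fin m) (u n : ℕ) :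
    parkingSf a (u + n) = parkingSf a u + ∑ i ∈ Finset.range n, parkingCf a (u + i) :=
  Finset.sum_range_add (parkingCf a) u n

end Counting

/-- The number of sequences `(a_1, …, a_L)` with values in `{1, …, m}` (encoded as `Fin m`,
with `a k = j` meaning the value `j+1`), where `L = ml + 1`, such that for every
`1 ≤ n ≤ m-1` at most `nl` entries belong to `{1, …, n}`, equals `m^(ml)`. -/
theorem card_generalized_parking (m l : ℕ) (hm : 1 ≤ m) (hl : 1 ≤ l) :
    Nat.card {a : Fin (m * l + 1) → Fin m //
        ∀ n : ℕ, 1 ≤ n → n ≤ m - 1 →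
          (univ.filter (fun k => (a k : ℕ) < n)).card ≤ n * l} =
      m ^ (m * l) := by
  classical
  haveI : NeZero m := ⟨by omega⟩
  set Good : (Fin (m * l + 1) → Fin m) → Prop := fun a =>
    ∀ n : ℕ, 1 ≤ n → n ≤ m - 1 →
      (univ.filter (fun k => (a k : ℕ) < n)).card ≤ n * l with hGoodDef
  -- the integer-valued height function
  set Fa : (Fin (m * l + 1) → Fin m) → ℕ → ℤ := fun a n =>
    (parkingSf a n : ℤ) - n * l with hFaDef
  have hF : ∀ a n, Fa a (n + m) = Fa a n + 1 := by
    intro a n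
    have hS : parkingSf a (n + m) = parkingSf a n + (m * l + 1) := by
      rw [parkingSf_add, parking_sum_period]
    simp only [hFaDef]
    rw [hS]
    push_cast
    ring
  -- characterization of goodness of shifted sequences
  have hGoodIff : ∀ (a : Fin (m * l + 1) → Fin m) (t : ℕ),
      Good (fun k => a k - (t : Fin m)) ↔
        ∀ n, 1 ≤ n → n < m → Fa a (t + n) ≤ Fa a t := by
    intro a t
    have hcount : ∀ n, n ≤ m →
        (univ.filter (fun k => ((a k - (t : Fin m) : Fin m) : ℕ) < n)).card
          = ∑ i ∈ Finset.range n, parkingCf a (t + i) :=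
      fun n hn => parking_count_shift a t n hn
    constructor
    · intro hg n hn1 hnm
      have h1 := hg n hn1 (by omega)
      rw [hcount n (by omega)] at h1
      have h2 := parkingSf_add a t n
      simp only [hFaDef]
      have h3 : (parkingSf a (t + n) : ℤ) = parkingSf a t + ∑ i ∈ Finset.range n, parkingCf a (t + i) := by
        exact_mod_cast h2
      have h4 : ((∑ i ∈ Finset.range n, parkingCf a (t + i) : ℕ) : ℤ) ≤ (n : ℤ) * l := by
        exact_mod_cast h1
      push_cast at h3 h4 ⊢
      linarith
    · intro hf n hn1 hnm
      have hnm' : n < m := by omega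
      have h1 := hf n hn1 hnm'
      rw [hcount n (le_of_lt hnm')]
      have h2 := parkingSf_add a t n
      simp only [hFaDef] at h1
      have h3 : (parkingSf a (t + n) : ℤ) = parkingSf a t + ∑ i ∈ Finset.range n, parkingCf a (t + i) := by
        exact_mod_cast h2
      have h4 : ((∑ i ∈ Finset.range n, parkingCf a (t + i) : ℕ) : ℤ) ≤ (n : ℤ) * l := by
        push_cast at h1 h3 ⊢
        linarith
      exact_mod_cast h4
  -- the unique good shift
  have hsig : ∀ a : Fin (m * l + 1) → Fin m,
      ∃ t, (t < m ∧ ∀ n, 1 ≤ n → n < m → Fa a (t + n) ≤ Fa a t) ∧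
        ∀ y, (y < m ∧ ∀ n, 1 ≤ n → n < m → Fa a (y + n) ≤ Fa a y) → y = t := by
    intro a
    obtain ⟨t, ht, huniq⟩ := parking_cycle_lemma m hm (Fa a) (hF a)
    exact ⟨t, ht, huniq⟩
  choose σ hσ hσuniq using hsig
  have good_shift : ∀ a, Good (fun k => a k - ((σ a : ℕ) : Fin m)) :=
    fun a => (hGoodIff a (σ a)).2 (hσ a).2
  have shift_uniq : ∀ (a : Fin (m * l + 1) → Fin m) (u : Fin m),
      Good (fun k => a k - u) → u = ((σ a : ℕ) : Fin m) := by
    intro a u hg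
    have h1 : Good (fun k => a k - ((u.val : ℕ) : Fin m)) := by
      rwa [Fin.cast_val_eq_self]
    have h2 := (hGoodIff a u.val).1 h1
    have h3 := hσuniq a u.val ⟨u.isLt, h2⟩
    rw [← Fin.cast_val_eq_self u, h3]
  -- the equivalence
  let e : {a : Fin (m * l + 1) → Fin m // Good a} × Fin m ≃ (Fin (m * l + 1) → Fin m) :=
  { toFun := fun p => fun k => p.1.1 k - p.2
    invFun := fun a =>
      (⟨fun k => a k - ((σ a : ℕ) : Fin m), good_shift a⟩, -((σ a : ℕ) : Fin m))
    left_inv := by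
      rintro ⟨⟨g, hg⟩, s⟩
      have hgood : Good (fun k => (fun k => g k - s) k - (-s)) := by
        simp only [sub_neg_eq_add, sub_add_cancel]
        exact hg
      have huniq := shift_uniq (fun k => g k - s) (-s) hgood
      ext k
      · simp only [← huniq, sub_neg_eq_add, sub_add_cancel]
      · simp only [← huniq, neg_neg]
    right_inv := by
      intro a
      funext k
      simp only [sub_neg_eq_add, sub_add_cancel] }
  have hcard := Nat.card_congr e
  rw [Nat.card_prod] at hcard
  have h1 : Nat.card (Fin m) = m := Nat.card_eq_of_equiv_fin (Equiv.refl _) ▸ by simp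
  have h2 : Nat.card (Fin (m * l + 1) → Fin m) = m ^ (m * l + 1) := by
    rw [Nat.card_eq_fintype_card, Fintype.card_fun, Fintype.card_fin, Fintype.card_fin]
  rw [h1, h2, pow_succ] at hcard
  exact Nat.eq_of_mul_eq_mul_right (by omega) hcard
end

section
/- If ε is a Catalan sequence and σ a pairing compatible with ε such that the quotient T_σ is a tree, then there is no vertex v of T_σ with v ≺ R, where R is the root. -/
open Finset

/-- `σ` is a pairing of `{1, …, k}`: a collection of 2-element subsets such that every
element lies in exactly one of them. -/
def IsPairing (k : ℕ) (σ : Finset (Finset (Fin k))) : Prop :=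
  (∀ p ∈ σ, p.card = 2) ∧ ∀ i : Fin k, ∃! p, p ∈ σ ∧ i ∈ p

/-- A pairing is compatible with a sign sequence `ε` if paired indices carry opposite
signs: `ε i + ε j = 0` for every pair `{i, j} ∈ σ`. -/
def Compatible (k : ℕ) (ε : Fin k → ℤ) (σ : Finset (Finset (Fin k))) : Prop :=
  ∀ p ∈ σ, ∀ i ∈ p, ∀ j ∈ p, i ≠ j → ε i + ε j = 0

/-- A pairing is non-crossing if there are no `p < q < r < s` with `{p,r}` and `{q,s}`
both in the pairing. -/
def NonCrossing (k : ℕ) (σ : Finset (Finset (Fin k))) : Prop :=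
  ¬ ∃ p q r s : Fin k, p < q ∧ q < r ∧ r < s ∧
      ({p, r} : Finset (Fin k)) ∈ σ ∧ ({q, s} : Finset (Fin k)) ∈ σ

/-- The gluing relation on the vertices `v_0, …, v_{k-1}` of the oriented `k`-gon:
for each `{i, j} ∈ σ` the edges `e_i` and `e_j` are glued so that `v_i` is identified
with `v_{j+1}` and `v_{i+1}` with `v_j` (indices mod `k`). -/
def glueRel (k : ℕ) [NeZero k] (σ : Finset (Finset (Fin k))) (a b : Fin k) : Prop :=
  ∃ i j : Fin k, ({i, j} : Finset (Fin k)) ∈ σ ∧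
    ((a = i ∧ b = j + 1) ∨ (a = i + 1 ∧ b = j))

/-- The vertices of the quotient graph `T_σ`: vertices of the `k`-gon modulo gluing. -/
def Vertices (k : ℕ) [NeZero k] (σ : Finset (Finset (Fin k))) : Type :=
  Quot (glueRel k σ)

/-- One oriented step in `T_σ`: `step x y` holds when there is an edge whose arrow points
from `y` to `x` (i.e. travel from `y` to `x` along one edge is allowed).  If `ε i = 1`
the arrow on edge `e_i` points from `v_{i+1}` to `v_i`, and conversely for `ε i = -1`. -/
def step (k : ℕ) [NeZero k] (ε : Fin k → ℤ) (σ : Finset (Finset (Fin k)))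
    (x y : Vertices k σ) : Prop :=
  ∃ i : Fin k,
    (ε i = 1 ∧ x = Quot.mk _ i ∧ y = Quot.mk _ (i + 1)) ∨
    (ε i = -1 ∧ x = Quot.mk _ (i + 1) ∧ y = Quot.mk _ i)

/-- The strict partial order `x ≺ y` on the vertices of `T_σ`: one can travel from `y`
to `x` through a positive number of edges, following the arrows. -/
def prec (k : ℕ) [NeZero k] (ε : Fin k → ℤ) (σ : Finset (Finset (Fin k)))
    (x y : Vertices k σ) : Prop :=
  Relation.TransGen (step k ε σ) x y

/-- The root of `T_σ`: the class of the distinguished vertex `v_1` of the polygon. -/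
def root (k : ℕ) [NeZero k] (σ : Finset (Finset (Fin k))) : Vertices k σ :=
  Quot.mk _ 0

/-- A Catalan sequence: entries in `{-1, +1}`, total sum `0`, and all partial sums
nonnegative. -/
def IsCatalan (k : ℕ) (ε : Fin k → ℤ) : Prop :=
  (∀ i, ε i = 1 ∨ ε i = -1) ∧ (∑ i, ε i = 0) ∧
    ∀ n : Fin k, 0 ≤ ∑ i ∈ univ.filter (· ≤ n), ε i

def Tsum (k : ℕ) (ε : Fin k → ℤ) (n : ℕ) : ℤ :=
  ∑ i ∈ Finset.range n, if h : i < k then ε ⟨i, h⟩ else 0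

lemma Tsum_zero (k : ℕ) (ε : Fin k → ℤ) : Tsum k ε 0 = 0 := by simp [Tsum]

lemma Tsum_succ (k : ℕ) (ε : Fin k → ℤ) (n : ℕ) (h : n < k) :
    Tsum k ε (n + 1) = Tsum k ε n + ε ⟨n, h⟩ := by
  simp [Tsum, Finset.sum_range_succ, h]

def emb (k mv : ℕ) (u : Fin (k - 2)) : Fin k :=
  if u.val < mv then ⟨u.val, by have := u.isLt; omega⟩
  else ⟨u.val + 2, by have := u.isLt; omega⟩

def del (k mv : ℕ) (hk : 2 < k) (hm : mv + 2 ≤ k) (v : Fin k) : Fin (k - 2) :=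
  if h : v.val < mv then ⟨v.val, by omega⟩ else ⟨v.val - 2, by have := v.isLt; omega⟩

lemma emb_val (k mv : ℕ) (u : Fin (k - 2)) :
    (emb k mv u).val = if u.val < mv then u.val else u.val + 2 := by
  unfold emb; split_ifs <;> rfl

lemma del_val (k mv : ℕ) (hk : 2 < k) (hm : mv + 2 ≤ k) (v : Fin k) :
    (del k mv hk hm v).val = if v.val < mv then v.val else v.val - 2 := by
  unfold del; split_ifs <;> rfl

lemma finValAddOne {N : ℕ} [NeZero N] (x : Fin N) :
    (x + 1).val = (x.val + 1) % N := by
  rw [Fin.val_add, Fin.val_one']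
  conv_rhs => rw [Nat.add_mod]
  conv_lhs => rw [Nat.add_mod]
  rw [Nat.mod_mod_of_dvd _ (dvd_refl N)]

lemma modIf {N a : ℕ} (h : a < N) :
    (a + 1) % N = if a + 1 = N then 0 else a + 1 := by
  split_ifs with h1
  · simp [h1]
  · exact Nat.mod_eq_of_lt (by omega)

lemma Tsum_eq_filter (k : ℕ) (ε : Fin k → ℤ) (a : Fin k) :
    ∑ i ∈ univ.filter (· ≤ a), ε i = Tsum k ε (a.val + 1) := by
  classical
  have himg : ((univ.filter (· ≤ a)).image Fin.val) = Finset.range (a.val + 1) := by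
    ext n
    simp only [mem_image, mem_filter, mem_univ, true_and, mem_range]
    constructor
    · rintro ⟨i, hi, rfl⟩
      have : i.val ≤ a.val := hi
      omega
    · intro hn
      exact ⟨⟨n, by have := a.isLt; omega⟩, by
        show (⟨n, _⟩ : Fin k) ≤ a
        exact Fin.mk_le_of_le_val (by omega), rfl⟩
  rw [Tsum, ← himg, Finset.sum_image (fun x _ y _ h => Fin.val_injective h)]
  apply Finset.sum_congr rfl
  intro i _
  rw [dif_pos i.isLt]

lemma Tsum_total (k : ℕ) (ε : Fin k → ℤ) (h : ∑ i, ε i = 0) : Tsum k ε k = 0 := by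
  rw [Tsum, ← Fin.sum_univ_eq_sum_range (fun n => if h : n < k then ε ⟨n, h⟩ else 0) k]
  rw [← h]
  apply Finset.sum_congr rfl
  intro i _
  rw [dif_pos i.isLt]

set_option maxHeartbeats 1000000 in
lemma keyK : ∀ k : ℕ, ∀ _inst : NeZero k, ∀ f : Fin k → Fin k,
    (∀ i, f (f i) = i) → (∀ i, f i ≠ i) →
    ∀ ε : Fin k → ℤ, (∀ i, ε (f i) = -ε i) →
    k + 2 ≤ 2 * Nat.card (Quot (fun a b : Fin k => b = f a + 1)) →
    ∀ t : Fin k, Tsum k ε ((f t).val + 1) = Tsum k ε t.val := by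
  intro k
  induction k using Nat.strong_induction_on with
  | _ k IH =>
  intro _inst f hinv hne ε hanti hcard t
  classical
  rcases Nat.lt_or_ge k 3 with hk3 | hk3
  · -- small cases
    interval_cases k
    · exact absurd t.isLt (by omega)
    · exact absurd (Subsingleton.elim (f 0) 0) (hne 0)
    · -- k = 2
      have h0 : (f 0).val = 1 := by
        have h := hne 0
        have h2 := (f 0).isLt
        have h3 : (f 0).val ≠ 0 := fun hh => h (Fin.ext hh)
        omega
      have h1 : (f 1).val = 0 := by
        have h := hne 1
        have h2 := (f 1).isLt
        have h3 : (f 1).val ≠ 1 := fun hh => h (Fin.ext hh)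
        omega
      obtain ⟨tv, htv⟩ := t
      interval_cases tv
      · have e0 : (⟨0, by omega⟩ : Fin 2) = 0 := rfl
        rw [e0, h0]
        show Tsum 2 ε 2 = Tsum 2 ε 0
        have pA : (1:ℕ) < 2 := by omega
        have pB : (0:ℕ) < 2 := by omega
        rw [Tsum_succ 2 ε 1 pA, Tsum_succ 2 ε 0 pB, Tsum_zero]
        have hg : ε ⟨1, pA⟩ = -ε ⟨0, pB⟩ := by
          rw [show (⟨1, pA⟩ : Fin 2) = f 0 from (Fin.ext h0).symm, hanti 0,
            show ((⟨0, pB⟩ : Fin 2)) = 0 from rfl]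
        rw [hg]
        ring
      · have e1 : (⟨1, by omega⟩ : Fin 2) = 1 := rfl
        rw [e1, h1]
        rfl
  · -- main case, k ≥ 3
    set r : Fin k → Fin k → Prop := fun a b => b = f a + 1 with hrdef
    set q : Fin k → Quot r := Quot.mk r with hqdef
    have hqstep : ∀ x : Fin k, q x = q (f x + 1) := fun x => Quot.sound rfl
    have hq_val : ∀ a b : Fin k, a.val = b.val → q a = q b := fun a b h =>
      congrArg q (Fin.ext h)
    letI : DecidableEq (Quot r) := Classical.decEq _
    have hqsurj : Function.Surjective q := fun c => Quot.exists_rep c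
    letI : Fintype (Quot r) := Fintype.ofSurjective q hqsurj
    set A : Finset (Quot r) := univ.image q with hAdef
    have hNatCard : Nat.card (Quot r) = A.card := by
      have h1 : A = univ := Finset.eq_univ_iff_forall.mpr (fun c => by
        obtain ⟨x, rfl⟩ := hqsurj c
        exact Finset.mem_image_of_mem q (mem_univ x))
      rw [h1, Finset.card_univ]
      exact Nat.card_eq_fintype_card
    set Fix : Finset (Fin k) := univ.filter (fun x => f x + 1 = x) with hFixdef
    have hFix2 : 2 ≤ Fix.card := by
      set fib : Quot r → Finset (Fin k) := fun c => univ.filter (fun x => q x = c) with hfib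
      have hsum : (univ : Finset (Fin k)).card = ∑ c ∈ A, (fib c).card :=
        Finset.card_eq_sum_card_fiberwise (fun x _ => Finset.mem_image_of_mem q (mem_univ x))
      set A₁ : Finset (Quot r) := A.filter (fun c => (fib c).card ≤ 1) with hA₁
      have hchoice : ∀ c ∈ A₁, ∃ x, q x = c ∧ f x + 1 = x := by
        intro c hc
        obtain ⟨hcA, hc1⟩ := Finset.mem_filter.mp hc
        obtain ⟨x, _, hx⟩ := Finset.mem_image.mp hcA
        refine ⟨x, hx, ?_⟩
        by_contra hfx
        have hsub : ({x, f x + 1} : Finset (Fin k)) ⊆ fib c := by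
          intro y hy
          rcases Finset.mem_insert.mp hy with rfl | hy
          · exact Finset.mem_filter.mpr ⟨mem_univ _, hx⟩
          · rw [Finset.mem_singleton.mp hy]
            exact Finset.mem_filter.mpr ⟨mem_univ _, by rw [← hqstep x]; exact hx⟩
        have h2 : 2 ≤ (fib c).card := by
          have hc2 := Finset.card_le_card hsub
          rwa [Finset.card_pair (fun h => hfx h.symm)] at hc2
        omega
      have hA₁Fix : A₁.card ≤ Fix.card := by
        refine Finset.card_le_card_of_injOn
          (fun c => if h : ∃ x, q x = c ∧ f x + 1 = x then h.choose else ⟨0, by omega⟩) ?_ ?_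
        · intro c hc
          have h := hchoice c hc
          simp only [dif_pos h]
          exact Finset.mem_filter.mpr ⟨mem_univ _, h.choose_spec.2⟩
        · intro c hc c' hc' hcc
          have h := hchoice c hc
          have h' := hchoice c' hc'
          simp only [dif_pos h, dif_pos h'] at hcc
          rw [← h.choose_spec.1, ← h'.choose_spec.1, hcc]
      have hbound : ∀ c ∈ A, (if (fib c).card ≤ 1 then (1:ℕ) else 2) ≤ (fib c).card := by
        intro c hc
        obtain ⟨x, _, hx⟩ := Finset.mem_image.mp hc
        have hx1 : 1 ≤ (fib c).card :=
          Finset.card_pos.mpr ⟨x, Finset.mem_filter.mpr ⟨mem_univ _, hx⟩⟩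
        split_ifs with h1 <;> omega
      have hsum2 : ∑ c ∈ A, (if (fib c).card ≤ 1 then (1:ℕ) else 2) ≤ ∑ c ∈ A, (fib c).card :=
        Finset.sum_le_sum hbound
      have hsum3 : ∑ c ∈ A, (if (fib c).card ≤ 1 then (1:ℕ) else 2)
          = A₁.card + 2 * (A.filter (fun c => ¬ (fib c).card ≤ 1)).card := by
        rw [Finset.sum_ite, Finset.sum_const, Finset.sum_const]
        simp [hA₁, mul_comm]
      have hsplit : A₁.card + (A.filter (fun c => ¬ (fib c).card ≤ 1)).card = A.card :=
        Finset.card_filter_add_card_filter_not _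
      have hkcard : (univ : Finset (Fin k)).card = k := by simp
      have hcardA : k + 2 ≤ 2 * A.card := by
        have hcard2 : k + 2 ≤ 2 * Nat.card (Quot r) := hcard
        omega
      omega
    have hex : ∃ t₀ : Fin k, f t₀ + 1 = t₀ ∧ t₀.val ≠ 0 := by
      obtain ⟨a, ha, b, hb, hab⟩ := Finset.one_lt_card.mp (by omega : 1 < Fix.card)
      have ha' := (Finset.mem_filter.mp ha).2
      have hb' := (Finset.mem_filter.mp hb).2
      rcases Nat.eq_zero_or_pos a.val with h0 | h0
      · refine ⟨b, hb', fun hb0 => hab (Fin.ext (by omega))⟩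
      · exact ⟨a, ha', by omega⟩
    obtain ⟨t₀, ht₀, ht₀0⟩ := hex
    set m : Fin k := f t₀ with hmdef
    have hmval : m.val + 1 = t₀.val := by
      have hv := finValAddOne m
      rw [ht₀] at hv
      have hm1 := modIf m.isLt
      rw [hm1] at hv
      split_ifs at hv <;> omega
    have hfm : f m = t₀ := hinv t₀
    have hm2 : m.val + 2 ≤ k := by have := t₀.isLt; omega
    haveI : NeZero (k-2) := ⟨by omega⟩
    set e : Fin (k-2) → Fin k := emb k m.val with hedef
    set d : Fin k → Fin (k-2) := del k m.val (by omega) (by omega) with hddef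
    have he_val : ∀ u : Fin (k-2), (e u).val = if u.val < m.val then u.val else u.val + 2 :=
      fun u => emb_val k m.val u
    have hd_val : ∀ v : Fin k, (d v).val = if v.val < m.val then v.val else v.val - 2 :=
      fun v => del_val k m.val _ _ v
    have he_ne : ∀ u, (e u).val ≠ m.val ∧ (e u).val ≠ t₀.val := by
      intro u
      rw [he_val]
      have := u.isLt
      constructor <;> (split_ifs <;> omega)
    have hed : ∀ v : Fin k, v.val ≠ m.val → v.val ≠ t₀.val → e (d v) = v := by
      intro v h1 h2
      apply Fin.ext
      rw [he_val, hd_val]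
      have := v.isLt
      split_ifs <;> omega
    have hde : ∀ u, d (e u) = u := by
      intro u
      apply Fin.ext
      rw [hd_val, he_val]
      have := u.isLt
      split_ifs <;> omega
    have hfe : ∀ u : Fin (k-2), (f (e u)).val ≠ m.val ∧ (f (e u)).val ≠ t₀.val := by
      intro u
      constructor
      · intro h
        have h1 : f (e u) = m := Fin.ext h
        have h2 : e u = t₀ := by rw [← hinv (e u), h1, hfm]
        exact (he_ne u).2 (congrArg Fin.val h2)
      · intro h
        have h1 : f (e u) = t₀ := Fin.ext h
        have h2 : e u = m := by rw [← hinv (e u), h1, ← hmdef]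
        exact (he_ne u).1 (congrArg Fin.val h2)
    set f' : Fin (k-2) → Fin (k-2) := fun u => d (f (e u)) with hf'def
    set ε' : Fin (k-2) → ℤ := fun u => ε (e u) with hε'def
    have hinv' : ∀ u, f' (f' u) = u := by
      intro u
      show d (f (e (d (f (e u))))) = u
      rw [hed _ (hfe u).1 (hfe u).2, hinv, hde]
    have hne' : ∀ u, f' u ≠ u := by
      intro u h
      have h2 : f (e u) = e u := by
        have h3 := congrArg e h
        rwa [show e (f' u) = e (d (f (e u))) from rfl, hed _ (hfe u).1 (hfe u).2] at h3
      exact hne (e u) h2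
    have hanti' : ∀ u, ε' (f' u) = -ε' u := by
      intro u
      show ε (e (d (f (e u)))) = -ε (e u)
      rw [hed _ (hfe u).1 (hfe u).2, hanti]
    set r' : Fin (k-2) → Fin (k-2) → Prop := fun a b => b = f' a + 1 with hr'def
    have hqm : q m = q (t₀ + 1) := by rw [hqstep m, hfm]
    have hkey : ∀ w : Fin k, w.val ≠ m.val → w.val ≠ t₀.val →
        q (e (d w + 1)) = q (w + 1) := by
      intro w hw1 hw2
      have hwlt := w.isLt
      have hdw : (d w).val = if w.val < m.val then w.val else w.val - 2 := hd_val w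
      have hdw1 : (d w + 1).val = ((d w).val + 1) % (k-2) := finValAddOne (d w)
      have hb : ((d w).val + 1) % (k-2) = if (d w).val + 1 = k - 2 then 0 else (d w).val + 1 :=
        modIf (d w).isLt
      have hval : (e (d w + 1)).val
          = if (d w + 1).val < m.val then (d w + 1).val else (d w + 1).val + 2 := he_val _
      have hw1v : (w + 1).val = (w.val + 1) % k := finValAddOne w
      have hwm : (w.val + 1) % k = if w.val + 1 = k then 0 else w.val + 1 := modIf hwlt
      have ht1 : (t₀ + 1).val = (t₀.val + 1) % k := finValAddOne t₀
      have ht2 : (t₀.val + 1) % k = if t₀.val + 1 = k then 0 else t₀.val + 1 := modIf t₀.isLt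
      by_cases hB : w.val + 1 = m.val
      · have hLv : (e (d w + 1)).val = (t₀ + 1).val := by
          rw [hval, hdw1, hb, hdw, ht1, ht2]
          split_ifs <;> omega
        calc q (e (d w + 1)) = q (t₀ + 1) := hq_val _ _ hLv
          _ = q m := hqm.symm
          _ = q (w + 1) := hq_val _ _ (by rw [hw1v, hwm]; split_ifs <;> omega)
      · by_cases hD : w.val = k - 1 ∧ m.val = 0
        · have hLv : (e (d w + 1)).val = (t₀ + 1).val := by
            rw [hval, hdw1, hb, hdw, ht1, ht2]
            split_ifs <;> omega
          calc q (e (d w + 1)) = q (t₀ + 1) := hq_val _ _ hLv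
            _ = q m := hqm.symm
            _ = q (w + 1) := hq_val _ _ (by rw [hw1v, hwm]; split_ifs <;> omega)
        · apply hq_val
          rw [hval, hdw1, hb, hdw, hw1v, hwm]
          split_ifs <;> omega
    have hwd : ∀ a b : Fin (k-2), r' a b → q (e a) = q (e b) := by
      intro a b hab
      rw [hab]
      show q (e a) = q (e (d (f (e a)) + 1))
      rw [hkey (f (e a)) (hfe a).1 (hfe a).2]
      exact hqstep (e a)
    set φ : Quot r' → Quot r := Quot.lift (fun u => q (e u)) (fun a b h => hwd a b h) with hφdef
    set G : Quot r' ⊕ Unit → Quot r := Sum.elim φ (fun _ => q t₀) with hGdef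
    have hGsurj : Function.Surjective G := by
      intro c
      obtain ⟨v, rfl⟩ := hqsurj c
      by_cases hv1 : v.val = t₀.val
      · exact ⟨Sum.inr ⟨⟩, hq_val t₀ v hv1.symm⟩
      · by_cases hv2 : v.val = m.val
        · have hvm : v = m := Fin.ext hv2
          have ht1 : (t₀ + 1).val = (t₀.val + 1) % k := finValAddOne t₀
          have ht2 : (t₀.val + 1) % k = if t₀.val + 1 = k then 0 else t₀.val + 1 := modIf t₀.isLt
          have hne1 : (t₀ + 1).val ≠ m.val := by rw [ht1, ht2]; split_ifs <;> omega
          have hne2 : (t₀ + 1).val ≠ t₀.val := by rw [ht1, ht2]; split_ifs <;> omega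
          refine ⟨Sum.inl (Quot.mk r' (d (t₀ + 1))), ?_⟩
          show q (e (d (t₀ + 1))) = q v
          rw [hed _ hne1 hne2, hvm]
          exact hqm.symm
        · refine ⟨Sum.inl (Quot.mk r' (d v)), ?_⟩
          show q (e (d v)) = q v
          rw [hed _ hv2 hv1]
    have hcard' : (k-2) + 2 ≤ 2 * Nat.card (Quot r') := by
      have hcard2 : k + 2 ≤ 2 * Nat.card (Quot r) := hcard
      have h1 : Nat.card (Quot r) ≤ Nat.card (Quot r' ⊕ Unit) :=
        Nat.card_le_card_of_surjective G hGsurj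
      rw [Nat.card_sum] at h1
      have h2 : Nat.card Unit = 1 := Nat.card_unique
      omega
    have hK' := IH (k-2) (by omega) ⟨by omega⟩ f' hinv' hne' ε' hanti' hcard'
    have hTT1 : ∀ n : ℕ, n ≤ m.val → Tsum (k-2) ε' n = Tsum k ε n := by
      intro n hn
      have hnk : n ≤ k - 2 := by omega
      unfold Tsum
      apply Finset.sum_congr rfl
      intro i hi
      have hi' : i < n := Finset.mem_range.mp hi
      rw [dif_pos (show i < k - 2 by omega), dif_pos (show i < k by omega)]
      show ε (e ⟨i, _⟩) = ε ⟨i, _⟩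
      congr 1
      apply Fin.ext
      rw [he_val]
      show (if i < m.val then i else i + 2) = i
      rw [if_pos (by omega)]
    have pA : m.val + 1 < k := by omega
    have pB : m.val < k := by omega
    have hTbal : Tsum k ε (m.val + 2) = Tsum k ε m.val := by
      rw [show m.val + 2 = (m.val + 1) + 1 from rfl, Tsum_succ k ε (m.val+1) pA,
        Tsum_succ k ε m.val pB]
      have e1 : (⟨m.val + 1, pA⟩ : Fin k) = t₀ := Fin.ext hmval
      have e2 : (⟨m.val, pB⟩ : Fin k) = m := Fin.ext rfl
      rw [e1, e2, ← hfm, hanti, hfm]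
      ring
    have hTT2 : ∀ n : ℕ, m.val ≤ n → n ≤ k - 2 → Tsum (k-2) ε' n = Tsum k ε (n + 2) := by
      intro n hmn
      induction n, hmn using Nat.le_induction with
      | base =>
        intro _
        rw [hTT1 m.val le_rfl]
        exact hTbal.symm
      | succ n hn ih =>
        intro hnk
        have hn2 : n ≤ k - 2 := by omega
        have pf : n < k - 2 := by omega
        have pf2 : n + 2 < k := by omega
        rw [Tsum_succ (k-2) ε' n pf, ih hn2,
          show n + 1 + 2 = (n + 2) + 1 from by omega, Tsum_succ k ε (n+2) pf2]
        congr 1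
        show ε (e ⟨n, pf⟩) = ε ⟨n + 2, pf2⟩
        congr 1
        apply Fin.ext
        rw [he_val]
        show (if n < m.val then n else n + 2) = n + 2
        rw [if_neg (by omega)]
    by_cases ht1 : t.val = t₀.val
    · have htt : t = t₀ := Fin.ext ht1
      rw [htt, ← hmdef, hmval]
    · by_cases ht2 : t.val = m.val
      · have htm : t = m := Fin.ext ht2
        rw [htm, hfm, show t₀.val + 1 = m.val + 2 from by omega]
        exact hTbal
      · have hwm : (f t).val ≠ m.val := by
          intro h
          apply ht1
          have h1 : f t = m := Fin.ext h
          have h2 : t = t₀ := by rw [← hinv t, h1, hfm]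
          exact congrArg Fin.val h2
        have hwt : (f t).val ≠ t₀.val := by
          intro h
          apply ht2
          have h1 : f t = t₀ := Fin.ext h
          have h2 : t = m := by rw [← hinv t, h1, ← hmdef]
          exact congrArg Fin.val h2
        have hut : e (d t) = t := hed t ht2 ht1
        have hdfu : f' (d t) = d (f t) := by
          show d (f (e (d t))) = d (f t)
          rw [hut]
        have hKu := hK' (d t)
        rw [hdfu] at hKu
        have hR : Tsum (k-2) ε' (d t).val = Tsum k ε t.val := by
          have hdt := hd_val t
          by_cases h : t.val < m.val
          · rw [hdt, if_pos h, hTT1 t.val (by omega)]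
          · have h3 : m.val + 2 ≤ t.val := by omega
            rw [hdt, if_neg h, hTT2 (t.val - 2) (by omega) (by have := t.isLt; omega)]
            congr 1
            omega
        have hL : Tsum (k-2) ε' ((d (f t)).val + 1) = Tsum k ε ((f t).val + 1) := by
          have hdt := hd_val (f t)
          by_cases h : (f t).val < m.val
          · rw [hdt, if_pos h, hTT1 ((f t).val + 1) (by omega)]
          · have h3 : m.val + 2 ≤ (f t).val := by omega
            rw [hdt, if_neg h,
              hTT2 ((f t).val - 2 + 1) (by omega) (by have := (f t).isLt; omega)]
            congr 1
            omega
        rw [hL, hR] at hKu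
        exact hKu

set_option maxHeartbeats 1000000 in
/-- If `ε` is a Catalan sequence and `σ` a compatible pairing such that the quotient
graph `T_σ` is a tree (equivalently, being connected with `k/2` edges, it has `k/2 + 1`
vertices), then there is no vertex `v` of `T_σ` with `v ≺ R`, where `R` is the root. -/
theorem no_vertex_below_root (k : ℕ) (hk : 0 < k) (ε : Fin k → ℤ)
    (hε : IsCatalan k ε) (σ : Finset (Finset (Fin k))) :
    letI : NeZero k := ⟨hk.ne'⟩
    IsPairing k σ → Compatible k ε σ → Nat.card (Vertices k σ) = k / 2 + 1 →
      ∀ v : Vertices k σ, ¬ prec k ε σ v (root k σ) := by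
  intro hpair hcompat hcard v hprec
  haveI : NeZero k := ⟨hk.ne'⟩
  classical
  -- extract the last step of the chain
  have hstep : ∃ x, step k ε σ x (root k σ) := by
    cases hprec with
    | single h => exact ⟨v, h⟩
    | tail _ h => exact ⟨_, h⟩
  obtain ⟨x, i, hcase⟩ := hstep
  -- the partner function
  have hpart : ∀ a : Fin k, ∃ j, a ≠ j ∧ ({a, j} : Finset (Fin k)) ∈ σ ∧ ε j = -ε a ∧
      ∀ p ∈ σ, a ∈ p → p = {a, j} := by
    intro a
    obtain ⟨p, ⟨hpσ, hap⟩, huniq⟩ := hpair.2 a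
    obtain ⟨x1, y1, hxy, hp2⟩ := Finset.card_eq_two.mp (hpair.1 p hpσ)
    have hmem := hap
    rw [hp2, Finset.mem_insert, Finset.mem_singleton] at hmem
    rcases hmem with rfl | rfl
    · refine ⟨y1, hxy, by rwa [← hp2], ?_, ?_⟩
      · have := hcompat p hpσ a (by rw [hp2]; simp) y1 (by rw [hp2]; simp) hxy
        linarith
      · intro p' hp' hap'
        rw [huniq p' ⟨hp', hap'⟩, hp2]
    · refine ⟨x1, fun h => hxy h.symm, ?_, ?_, ?_⟩
      · rw [Finset.pair_comm a x1, ← hp2]; exact hpσ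
      · have := hcompat p hpσ a (by rw [hp2]; simp) x1 (by rw [hp2]; simp)
          (fun h => hxy h.symm)
        linarith
      · intro p' hp' hap'
        rw [huniq p' ⟨hp', hap'⟩, hp2, Finset.pair_comm]
  choose pa hpane hpamem hpaanti hpauniq using hpart
  have hinv : ∀ a, pa (pa a) = a := by
    intro a
    have h2 := hpauniq (pa a) {a, pa a} (hpamem a) (by simp)
    have h3 : a ∈ ({pa a, pa (pa a)} : Finset (Fin k)) := by rw [← h2]; simp
    rcases Finset.mem_insert.mp h3 with h4 | h4
    · exact absurd h4 (hpane a)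
    · exact (Finset.mem_singleton.mp h4).symm
  have hne : ∀ a, pa a ≠ a := fun a h => (hpane a) h.symm
  set r : Fin k → Fin k → Prop := fun a b => b = pa a + 1 with hrdef
  have hglue_r : ∀ a b, glueRel k σ a b → Relation.EqvGen r a b := by
    rintro a b ⟨i', j', hij, hcase2⟩
    have hij2 : i' ≠ j' := by
      intro h
      rw [h] at hij
      have h5 := hpair.1 _ hij
      simp at h5
    have hji : j' = pa i' := by
      have h2 := hpauniq i' {i', j'} hij (by simp)
      have h3 : j' ∈ ({i', pa i'} : Finset (Fin k)) := by rw [← h2]; simp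
      rcases Finset.mem_insert.mp h3 with h4 | h4
      · exact absurd h4 (Ne.symm hij2)
      · exact Finset.mem_singleton.mp h4
    have hijp : i' = pa j' := by
      have h2 := hpauniq j' {i', j'} hij (by rw [Finset.pair_comm]; simp)
      have h3 : i' ∈ ({j', pa j'} : Finset (Fin k)) := by rw [← h2]; simp
      rcases Finset.mem_insert.mp h3 with h4 | h4
      · exact absurd h4 hij2
      · exact Finset.mem_singleton.mp h4
    rcases hcase2 with ⟨rfl, rfl⟩ | ⟨rfl, rfl⟩
    · exact Relation.EqvGen.rel _ _ (by rw [hji])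
    · exact Relation.EqvGen.symm _ _ (Relation.EqvGen.rel _ _ (by rw [hijp]))
  have hr_glue : ∀ a b, r a b → glueRel k σ a b := by
    intro a b hab
    exact ⟨a, pa a, hpamem a, Or.inl ⟨rfl, hab⟩⟩
  let E : Vertices k σ ≃ Quot r :=
    { toFun := Quot.lift (Quot.mk r) (fun a b h => Quot.eqvGen_sound (hglue_r a b h))
      invFun := Quot.lift (Quot.mk (glueRel k σ)) (fun a b h => Quot.sound (hr_glue a b h))
      left_inv := by
        intro c
        induction c using Quot.ind
        rfl
      right_inv := by
        intro c
        induction c using Quot.ind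
        rfl }
  have hmk : ∀ a b : Fin k, Quot.mk (glueRel k σ) a = Quot.mk (glueRel k σ) b →
      Relation.EqvGen r a b := by
    intro a b h
    exact Quot.eqvGen_exact (congrArg E.toFun h)
  -- cardinality and parity
  have hE : Nat.card (Quot r) = k / 2 + 1 := (Nat.card_congr E).symm.trans hcard
  have heven : k % 2 = 0 := by
    have hsum0 := hε.2.1
    have hsplit := Finset.sum_filter_add_sum_filter_not univ (fun i : Fin k => ε i = 1) ε
    have h1 : ∑ i ∈ univ.filter (fun i : Fin k => ε i = 1), ε i
        = ((univ.filter (fun i : Fin k => ε i = 1)).card : ℤ) := by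
      rw [Finset.sum_congr rfl (fun i hi => (Finset.mem_filter.mp hi).2),
        Finset.sum_const, nsmul_eq_mul]
      ring
    have h2 : ∑ i ∈ univ.filter (fun i : Fin k => ¬ ε i = 1), ε i
        = -(((univ.filter (fun i : Fin k => ¬ ε i = 1)).card : ℤ)) := by
      have hterm : ∀ i ∈ univ.filter (fun i : Fin k => ¬ ε i = 1), ε i = -1 := by
        intro i hi
        have h3 := (Finset.mem_filter.mp hi).2
        rcases hε.1 i with h4 | h4
        · exact absurd h4 h3
        · exact h4
      rw [Finset.sum_congr rfl hterm, Finset.sum_const, nsmul_eq_mul]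
      ring
    have h3 := Finset.card_filter_add_card_filter_not
      (s := (univ : Finset (Fin k))) (p := fun i : Fin k => ε i = 1)
    have h4 : (univ : Finset (Fin k)).card = k := by simp
    rw [h1, h2, hsum0] at hsplit
    omega
  have hKey : ∀ t : Fin k, Tsum k ε ((pa t).val + 1) = Tsum k ε t.val := by
    apply keyK k ⟨hk.ne'⟩ pa hinv hne ε hpaanti
    have : k + 2 ≤ 2 * Nat.card (Quot r) := by rw [hE]; omega
    exact this
  have htot : Tsum k ε k = 0 := Tsum_total k ε hε.2.1
  have hpos : ∀ n : ℕ, n ≤ k → 0 ≤ Tsum k ε n := by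
    intro n hn
    rcases Nat.eq_zero_or_pos n with rfl | hn0
    · rw [Tsum_zero]
    · have h5 := hε.2.2 ⟨n - 1, by omega⟩
      rw [Tsum_eq_filter] at h5
      have h6 : Tsum k ε ((⟨n - 1, by omega⟩ : Fin k).val + 1) = Tsum k ε n := by
        congr 1
        show n - 1 + 1 = n
        omega
      rwa [h6] at h5
  -- constancy of Tsum on classes
  have hcst : ∀ a b : Fin k, Relation.EqvGen r a b → Tsum k ε a.val = Tsum k ε b.val := by
    intro a b h
    induction h with
    | rel x y hxy =>
      rw [hxy]
      have h1 : (pa x + 1).val = ((pa x).val + 1) % k := finValAddOne (pa x)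
      have h2 := modIf (pa x).isLt
      rw [h1, h2]
      split_ifs with h3
      · rw [Tsum_zero, ← hKey x, h3, htot]
      · exact (hKey x).symm
    | refl x => rfl
    | symm x y _ ih => exact ih.symm
    | trans x y z _ _ ih1 ih2 => exact ih1.trans ih2
  have hei_eq : ∀ j : Fin k, ε ⟨j.val, j.isLt⟩ = ε j := fun j => congrArg ε (Fin.ext rfl)
  rcases hcase with ⟨hei, _, hroot⟩ | ⟨hei, _, hroot⟩
  · -- ε i = 1, root = class of i+1
    have h0 : Quot.mk (glueRel k σ) (0 : Fin k) = Quot.mk (glueRel k σ) (i + 1) := hroot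
    have hT := hcst _ _ (hmk _ _ h0)
    have hz : ((0 : Fin k)).val = 0 := rfl
    rw [hz, Tsum_zero] at hT
    have h6 : Tsum k ε (i.val + 1) = Tsum k ε i.val + ε i := by
      rw [Tsum_succ k ε i.val i.isLt, hei_eq]
    by_cases hik : i.val + 1 = k
    · have h7 := h6
      rw [hik] at h7
      have hp := hpos i.val (by omega)
      rw [htot, hei] at h7
      omega
    · have h5 : ((i + 1) : Fin k).val = i.val + 1 := by
        rw [finValAddOne i, modIf i.isLt, if_neg hik]
      rw [h5] at hT
      have hp := hpos i.val (by have := i.isLt; omega)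
      rw [hei] at h6
      omega
  · -- ε i = -1, root = class of i
    have h0 : Quot.mk (glueRel k σ) (0 : Fin k) = Quot.mk (glueRel k σ) i := hroot
    have hT := hcst _ _ (hmk _ _ h0)
    have hz : ((0 : Fin k)).val = 0 := rfl
    rw [hz, Tsum_zero] at hT
    have h6 : Tsum k ε (i.val + 1) = Tsum k ε i.val + ε i := by
      rw [Tsum_succ k ε i.val i.isLt, hei_eq]
    have hp := hpos (i.val + 1) (by have := i.isLt; omega)
    rw [hei] at h6
    omega
end

section
/- In the pairing σ between corresponding brackets of a balanced bracket sequence (left bracket = +1, right bracket = -1), the quotient graph T_σ is a tree if and only if σ is non-crossing; more generally, for any pairing σ compatible with ε, the quotient graph T_σ is a tree if and only if σ is non-crossing. -/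
open Finset

section Tau
variable {k : ℕ} (σ : Finset (Finset (Fin k)))

noncomputable def tau (i : Fin k) : Fin k :=
  if h : ∃ j, j ≠ i ∧ ({i, j} : Finset (Fin k)) ∈ σ then h.choose else i

variable {σ}

theorem tau_spec (hσ : IsPairing k σ) (i : Fin k) :
    tau σ i ≠ i ∧ ({i, tau σ i} : Finset (Fin k)) ∈ σ := by
  obtain ⟨p, ⟨hp, hip⟩, huniq⟩ := hσ.2 i
  obtain ⟨a, b, hab, rfl⟩ := Finset.card_eq_two.mp (hσ.1 p hp)
  have h : ∃ j, j ≠ i ∧ ({i, j} : Finset (Fin k)) ∈ σ := by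
    rcases Finset.mem_insert.mp hip with rfl | hb
    · exact ⟨b, fun h => hab h.symm, hp⟩
    · have hbi : i = b := Finset.mem_singleton.mp hb
      subst hbi
      exact ⟨a, fun h => hab h, by rwa [Finset.pair_comm]⟩
  rw [tau, dif_pos h]
  exact ⟨h.choose_spec.1, h.choose_spec.2⟩

theorem pair_tau_mem (hσ : IsPairing k σ) (i : Fin k) :
    ({i, tau σ i} : Finset (Fin k)) ∈ σ := (tau_spec hσ i).2

theorem tau_ne (hσ : IsPairing k σ) (i : Fin k) : tau σ i ≠ i := (tau_spec hσ i).1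

theorem eq_tau_of_mem (hσ : IsPairing k σ) {i j : Fin k} (h : ({i, j} : Finset (Fin k)) ∈ σ)
    (hne : j ≠ i) : j = tau σ i := by
  obtain ⟨p, _, huniq⟩ := hσ.2 i
  have h1 : ({i, j} : Finset (Fin k)) = p := huniq _ ⟨h, Finset.mem_insert_self _ _⟩
  have h2 : ({i, tau σ i} : Finset (Fin k)) = p :=
    huniq _ ⟨pair_tau_mem hσ i, Finset.mem_insert_self _ _⟩
  have : j ∈ ({i, tau σ i} : Finset (Fin k)) := by
    rw [h2, ← h1]; exact Finset.mem_insert_of_mem (Finset.mem_singleton_self _)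
  rcases Finset.mem_insert.mp this with rfl | h
  · exact absurd rfl hne
  · exact Finset.mem_singleton.mp h

theorem tau_tau (hσ : IsPairing k σ) (i : Fin k) : tau σ (tau σ i) = i := by
  have := pair_tau_mem hσ i
  rw [Finset.pair_comm] at this
  exact (eq_tau_of_mem hσ this (Ne.symm (tau_ne hσ i))).symm

theorem glueRel_iff [NeZero k] (hσ : IsPairing k σ) {a b : Fin k} :
    glueRel k σ a b ↔ b = tau σ a + 1 ∨ a = tau σ b + 1 := by
  constructor
  · rintro ⟨i, j, hij, hcase⟩
    have hne : j ≠ i := by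
      rintro rfl
      have := hσ.1 _ hij
      simp at this
    rcases hcase with ⟨ha, hb⟩ | ⟨ha, hb⟩
    · left; rw [ha, hb, eq_tau_of_mem hσ hij hne]
    · right
      rw [Finset.pair_comm] at hij
      rw [ha, hb, eq_tau_of_mem hσ hij hne.symm]
  · rintro (rfl | rfl)
    · exact ⟨a, tau σ a, pair_tau_mem hσ a, Or.inl ⟨rfl, rfl⟩⟩
    · refine ⟨tau σ b, b, ?_, Or.inr ⟨rfl, rfl⟩⟩
      rw [Finset.pair_comm]; exact pair_tau_mem hσ b

theorem mk_tau_add_one [NeZero k] (hσ : IsPairing k σ) (a : Fin k) :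
    Quot.mk (glueRel k σ) (tau σ a + 1) = Quot.mk _ a :=
  (Quot.sound ((glueRel_iff hσ).mpr (Or.inl rfl))).symm

theorem k_even (hσ : IsPairing k σ) : k = 2 * σ.card := by
  have hdisj : (σ : Set (Finset (Fin k))).PairwiseDisjoint id := by
    intro p hp q hq hpq
    simp only [Finset.disjoint_left, id]
    intro x hxp hxq
    obtain ⟨P, _, huniq⟩ := hσ.2 x
    exact hpq ((huniq p ⟨hp, hxp⟩).trans (huniq q ⟨hq, hxq⟩).symm)
  have hcover : (Finset.univ : Finset (Fin k)) = σ.biUnion id := by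
    ext i
    simp only [Finset.mem_univ, true_iff, Finset.mem_biUnion, id]
    obtain ⟨p, ⟨hp, hip⟩, _⟩ := hσ.2 i
    exact ⟨p, hp, hip⟩
  have h1 : (Finset.univ : Finset (Fin k)).card = ∑ p ∈ σ, (id p : Finset (Fin k)).card := by
    rw [hcover]
    exact Finset.card_biUnion (fun p hp q hq h => hdisj hp hq h)
  simp only [Finset.card_univ, Fintype.card_fin, id] at h1
  have h2 : ∑ p ∈ σ, p.card = 2 * σ.card := by
    rw [Finset.sum_congr rfl (fun p hp => hσ.1 p hp), Finset.sum_const, smul_eq_mul, mul_comm]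
  omega
end Tau

section NoAdj
variable {k : ℕ} [NeZero k] {σ : Finset (Finset (Fin k))}

theorem two_mul_card_le (hσ : IsPairing k σ)
    (hnoadj : ∀ c : Fin k, (c : ℕ) + 1 < k → ({c, c + 1} : Finset (Fin k)) ∉ σ) :
    2 * Nat.card (Vertices k σ) ≤ k + 1 := by
  classical
  haveI : Finite (Vertices k σ) := Quot.finite _
  letI : Fintype (Vertices k σ) := Fintype.ofFinite _
  set q : Fin k → Vertices k σ := Quot.mk _ with hq
  have key : ∀ a : Fin k, q (tau σ a + 1) = q a := fun a => mk_tau_add_one hσ a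
  have hfix : ∀ a : Fin k, tau σ a + 1 = a → a = 0 := by
    intro a ha
    by_contra h0
    have haval : 0 < (a : ℕ) := by
      rcases Nat.eq_zero_or_pos (a : ℕ) with h | h
      · exact absurd (Fin.ext (by simp [h])) h0
      · exact h
    have hk2 : 2 ≤ k := by
      have := a.isLt
      omega
    have h1k : (1 : ℕ) % k = 1 := Nat.mod_eq_of_lt (by omega)
    set c : Fin k := ⟨(a : ℕ) - 1, by omega⟩ with hc
    have hcv : (c : ℕ) = (a : ℕ) - 1 := rfl
    have hca : c + 1 = a := by
      ext
      rw [Fin.val_add, Fin.val_one', h1k, Nat.mod_eq_of_lt (by omega)]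
      omega
    have htc : tau σ a = c := by
      have hv : ((tau σ a : ℕ) + 1) % k = (a : ℕ) := by
        have := congrArg Fin.val ha
        rwa [Fin.val_add, Fin.val_one', h1k] at this
      ext
      rw [hcv]
      have h1 : (tau σ a : ℕ) < k := (tau σ a).isLt
      rcases Nat.lt_or_ge ((tau σ a : ℕ) + 1) k with h | h
      · rw [Nat.mod_eq_of_lt h] at hv; omega
      · have hk3 : (tau σ a : ℕ) + 1 = k := by omega
        rw [hk3, Nat.mod_self] at hv
        omega
    have hmem : ({c, c + 1} : Finset (Fin k)) ∈ σ := by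
      rw [hca, ← htc, Finset.pair_comm]
      exact pair_tau_mem hσ a
    exact hnoadj c (by rw [hcv]; omega) hmem
  -- fiber counting
  have hcount : (Finset.univ : Finset (Fin k)).card =
      ∑ v ∈ (Finset.univ : Finset (Vertices k σ)),
        ((Finset.univ : Finset (Fin k)).filter (fun a => q a = v)).card :=
    Finset.card_eq_sum_card_fiberwise (fun x _ => Finset.mem_univ _)
  have hbig : ∀ v : Vertices k σ, v ≠ q 0 →
      2 ≤ ((Finset.univ : Finset (Fin k)).filter (fun a => q a = v)).card := by
    intro v hv
    obtain ⟨a, rfl⟩ := Quot.exists_rep v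
    have ha : a ∈ (Finset.univ : Finset (Fin k)).filter (fun x => q x = q a) := by
      exact Finset.mem_filter.mpr ⟨Finset.mem_univ _, rfl⟩
    have hb : tau σ a + 1 ∈ (Finset.univ : Finset (Fin k)).filter (fun x => q x = q a) := by
      simp only [Finset.mem_filter, Finset.mem_univ, true_and]
      exact key a
    have hne : tau σ a + 1 ≠ a := by
      intro h
      exact hv (by rw [hfix a h])
    exact Finset.one_lt_card.mpr ⟨a, ha, tau σ a + 1, hb, fun h => hne h.symm⟩
  have h0mem : (q 0) ∈ (Finset.univ : Finset (Vertices k σ)) := Finset.mem_univ _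
  have hsplit := (Finset.add_sum_erase _
    (fun v => ((Finset.univ : Finset (Fin k)).filter (fun a => q a = v)).card) h0mem).symm
  have hpos : 1 ≤ ((Finset.univ : Finset (Fin k)).filter (fun a => q a = q 0)).card := by
    apply Finset.card_pos.mpr
    exact ⟨0, Finset.mem_filter.mpr ⟨Finset.mem_univ _, rfl⟩⟩
  have hrest : ∑ v ∈ (Finset.univ : Finset (Vertices k σ)).erase (q 0),
      ((Finset.univ : Finset (Fin k)).filter (fun a => q a = v)).card ≥
      2 * ((Finset.univ : Finset (Vertices k σ)).erase (q 0)).card := by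
    rw [ge_iff_le, mul_comm, ← smul_eq_mul, ← Finset.sum_const]
    exact Finset.sum_le_sum (fun v hv => hbig v (Finset.ne_of_mem_erase hv))
  have hcard_erase : ((Finset.univ : Finset (Vertices k σ)).erase (q 0)).card =
      Fintype.card (Vertices k σ) - 1 := by
    rw [Finset.card_erase_of_mem h0mem, Finset.card_univ]
  have hk : (Finset.univ : Finset (Fin k)).card = k := by simp
  have hV1 : 1 ≤ Fintype.card (Vertices k σ) :=
    Fintype.card_pos_iff.mpr ⟨q 0⟩
  rw [Nat.card_eq_fintype_card]
  omega
end NoAdj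

section Crossing
variable {k : ℕ} [NeZero k] {σ : Finset (Finset (Fin k))}

theorem not_noncrossing_of_noadj (hσ : IsPairing k σ)
    (hnoadj : ∀ c : Fin k, (c : ℕ) + 1 < k → ({c, c + 1} : Finset (Fin k)) ∉ σ) :
    ¬ NonCrossing k σ := by
  classical
  intro hnc
  -- minimal-gap pair
  set S : Finset (Fin k) := Finset.univ.filter (fun i => (i : ℕ) < (tau σ i : ℕ)) with hS
  have hSne : S.Nonempty := by
    refine ⟨0, ?_⟩
    simp only [hS, Finset.mem_filter, Finset.mem_univ, true_and]
    have := tau_ne hσ 0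
    have h0 : ((0 : Fin k) : ℕ) = 0 := rfl
    rcases Nat.eq_zero_or_pos ((tau σ 0 : Fin k) : ℕ) with h | h
    · exact absurd (Fin.ext (by rw [h, h0])) this
    · omega
  obtain ⟨p, hpS, hmin⟩ := Finset.exists_min_image S (fun i => (tau σ i : ℕ) - (i : ℕ)) hSne
  set r : Fin k := tau σ p with hr
  have hpr : (p : ℕ) < (r : ℕ) := by
    simpa [hS, hr] using hpS
  have hprmem : ({p, r} : Finset (Fin k)) ∈ σ := pair_tau_mem hσ p
  -- gap at least 2
  have hgap : (p : ℕ) + 2 ≤ (r : ℕ) := by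
    by_contra hle
    have hpr1 : (r : ℕ) = (p : ℕ) + 1 := by omega
    have hlt : (p : ℕ) + 1 < k := by
      have := r.isLt; omega
    have h1k : (1 : ℕ) % k = 1 := Nat.mod_eq_of_lt (by omega)
    have : r = p + 1 := by
      ext; rw [Fin.val_add, Fin.val_one', h1k, Nat.mod_eq_of_lt (by omega), hpr1]
    exact hnoadj p hlt (this ▸ hprmem)
  -- q = p+1
  have hq1 : (p : ℕ) + 1 < k := by have := r.isLt; omega
  set Q : Fin k := ⟨(p : ℕ) + 1, hq1⟩ with hQ
  have hQne : Q ≠ p := by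
    intro h; have := congrArg Fin.val h; simp [hQ] at this
  set s : Fin k := tau σ Q with hs
  have hsQ : s ≠ Q := tau_ne hσ Q
  have hQs : ({Q, s} : Finset (Fin k)) ∈ σ := pair_tau_mem hσ Q
  have hsp : s ≠ p := by
    intro h
    have : tau σ s = Q := by rw [hs, tau_tau hσ]
    rw [h] at this
    have : (Q : ℕ) = (r : ℕ) := by rw [← this, ← hr]
    simp only [hQ] at this
    omega
  have hsr : s ≠ r := by
    intro h
    have h2 : tau σ s = Q := by rw [hs, tau_tau hσ]
    rw [h, hr, tau_tau hσ] at h2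
    exact hQne h2.symm
  have hcase : (s : ℕ) < (p : ℕ) ∨ (r : ℕ) < (s : ℕ) := by
    by_contra hcon
    push_neg at hcon
    obtain ⟨h1, h2⟩ := hcon
    have hps : (p : ℕ) < (s : ℕ) := by
      rcases Nat.lt_or_ge (p : ℕ) (s : ℕ) with h | h
      · exact h
      · have : (s : ℕ) = (p : ℕ) := by omega
        exact absurd (Fin.ext this) hsp
    have hsrlt : (s : ℕ) < (r : ℕ) := by
      rcases Nat.lt_or_ge (s : ℕ) (r : ℕ) with h | h
      · exact h
      · have : (s : ℕ) = (r : ℕ) := by omega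
        exact absurd (Fin.ext this) hsr
    have hQsval : (Q : ℕ) < (s : ℕ) := by
      have hne : (s : ℕ) ≠ (p : ℕ) + 1 := by
        intro h
        exact hsQ (Fin.ext (by rw [h]))
      have hQv : (Q : ℕ) = (p : ℕ) + 1 := rfl
      omega
    have hQS : Q ∈ S := by
      simp only [hS, Finset.mem_filter, Finset.mem_univ, true_and, ← hs]
      exact hQsval
    have := hmin Q hQS
    rw [← hs] at this
    have hQv : (Q : ℕ) = (p : ℕ) + 1 := rfl
    omega
  rcases hcase with h | h
  · exact hnc ⟨s, p, Q, r, h, by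
      show (p : ℕ) < (Q : ℕ); show (p : ℕ) < (p : ℕ) + 1; omega, by
      show (Q : ℕ) < (r : ℕ); show (p : ℕ) + 1 < (r : ℕ); omega,
      by rw [Finset.pair_comm]; exact hQs, hprmem⟩
  · exact hnc ⟨p, Q, r, s, by
      show (p : ℕ) < (Q : ℕ); show (p : ℕ) < (p : ℕ) + 1; omega, by
      show (Q : ℕ) < (r : ℕ); show (p : ℕ) + 1 < (r : ℕ); omega, h,
      hprmem, hQs⟩
end Crossing

section Reduce
set_option linter.unusedSectionVars false
set_option linter.unusedVariables false
variable {k m : ℕ} [NeZero k] [NeZero m]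

def rmap (c : ℕ) (a : Fin k) : Fin m :=
  ⟨(if (a : ℕ) < c then (a : ℕ) else (a : ℕ) - 2) % m, Nat.mod_lt _ (Nat.pos_of_neZero m)⟩

def emap (c : ℕ) (x : Fin m) : Fin k :=
  ⟨(if (x : ℕ) < c then (x : ℕ) else (x : ℕ) + 2) % k, Nat.mod_lt _ (Nat.pos_of_neZero k)⟩

theorem emap_val (hm : m + 2 = k) (c : ℕ) (hc : c + 1 < k) (x : Fin m) :
    ((emap c x : Fin k) : ℕ) = if (x : ℕ) < c then (x : ℕ) else (x : ℕ) + 2 := by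
  have := x.isLt
  simp only [emap]
  split <;> rw [Nat.mod_eq_of_lt (by omega)]

theorem rmap_val (hm : m + 2 = k) (c : ℕ) (hc : c + 1 < k) (a : Fin k)
    (ha : (a : ℕ) ≠ c) (ha' : (a : ℕ) ≠ c + 1) :
    ((rmap c a : Fin m) : ℕ) = if (a : ℕ) < c then (a : ℕ) else (a : ℕ) - 2 := by
  have := a.isLt
  simp only [rmap]
  split <;> rw [Nat.mod_eq_of_lt (by omega)]

theorem rmap_emap (hm : m + 2 = k) (c : ℕ) (hc : c + 1 < k) (x : Fin m) :
    rmap c (emap c x : Fin k) = x := by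
  have hx := x.isLt
  have hv := emap_val hm c hc x
  have h1 : ((emap c x : Fin k) : ℕ) ≠ c := by rw [hv]; split <;> omega
  have h2 : ((emap c x : Fin k) : ℕ) ≠ c + 1 := by rw [hv]; split <;> omega
  ext
  rw [rmap_val hm c hc _ h1 h2, hv]
  split_ifs <;> omega

theorem emap_rmap (hm : m + 2 = k) (c : ℕ) (hc : c + 1 < k) (a : Fin k)
    (ha : (a : ℕ) ≠ c) (ha' : (a : ℕ) ≠ c + 1) :
    emap c (rmap c a : Fin m) = a := by
  have hk := a.isLt
  have hv := rmap_val hm c hc a ha ha'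
  ext
  rw [emap_val hm c hc, hv]
  split_ifs <;> omega

theorem emap_ne_c (hm : m + 2 = k) (c : ℕ) (hc : c + 1 < k) (x : Fin m) :
    ((emap c x : Fin k) : ℕ) ≠ c ∧ ((emap c x : Fin k) : ℕ) ≠ c + 1 := by
  have hv := emap_val hm c hc x
  constructor <;> rw [hv] <;> split <;> omega

theorem emap_strictMono (hm : m + 2 = k) (c : ℕ) (hc : c + 1 < k) {x y : Fin m}
    (h : (x : ℕ) < (y : ℕ)) : ((emap c x : Fin k) : ℕ) < ((emap c y : Fin k) : ℕ) := by
  rw [emap_val hm c hc, emap_val hm c hc]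
  split <;> split <;> omega

theorem rmap_strictMono (hm : m + 2 = k) (c : ℕ) (hc : c + 1 < k) {a b : Fin k}
    (ha : (a : ℕ) ≠ c) (ha' : (a : ℕ) ≠ c + 1) (hb : (b : ℕ) ≠ c) (hb' : (b : ℕ) ≠ c + 1)
    (h : (a : ℕ) < (b : ℕ)) : ((rmap c a : Fin m) : ℕ) < ((rmap c b : Fin m) : ℕ) := by
  rw [rmap_val hm c hc _ ha ha', rmap_val hm c hc _ hb hb']
  split <;> split <;> omega

end Reduce

section Tau2
variable {k : ℕ} {σ : Finset (Finset (Fin k))}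

theorem mem_pair_eq (hσ : IsPairing k σ) {P : Finset (Fin k)} (hP : P ∈ σ) {a : Fin k}
    (haP : a ∈ P) : P = {a, tau σ a} := by
  obtain ⟨Q, _, huniq⟩ := hσ.2 a
  rw [huniq P ⟨hP, haP⟩,
    ← huniq {a, tau σ a} ⟨pair_tau_mem hσ a, Finset.mem_insert_self _ _⟩]
end Tau2

section Reduce2
set_option linter.unusedSectionVars false
variable {k m : ℕ} [NeZero k] [NeZero m] {σ : Finset (Finset (Fin k))} {c : Fin k}

def sigma' (m : ℕ) [NeZero m] (σ : Finset (Finset (Fin k))) (c : Fin k) :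
    Finset (Finset (Fin m)) :=
  (σ.erase {c, c + 1}).image (fun P => P.image (rmap (c : ℕ)))

theorem val_c1 (hc : (c : ℕ) + 1 < k) : ((c + 1 : Fin k) : ℕ) = (c : ℕ) + 1 := by
  rw [Fin.val_add, Fin.val_one', Nat.mod_eq_of_lt (show 1 < k by omega),
    Nat.mod_eq_of_lt (by omega)]

theorem c1_ne (hc : (c : ℕ) + 1 < k) : c + 1 ≠ c := by
  intro h
  have := congrArg Fin.val h
  rw [val_c1 hc] at this
  omega

theorem tau_c (hσ : IsPairing k σ) (hc : (c : ℕ) + 1 < k)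
    (hpair : ({c, c + 1} : Finset (Fin k)) ∈ σ) : tau σ c = c + 1 :=
  (eq_tau_of_mem hσ hpair (c1_ne hc)).symm

theorem tau_c1 (hσ : IsPairing k σ) (hc : (c : ℕ) + 1 < k)
    (hpair : ({c, c + 1} : Finset (Fin k)) ∈ σ) : tau σ (c + 1) = c := by
  rw [Finset.pair_comm] at hpair
  exact (eq_tau_of_mem hσ hpair (Ne.symm (c1_ne hc))).symm

theorem pair_notin (hσ : IsPairing k σ) (hc : (c : ℕ) + 1 < k)
    (hpair : ({c, c + 1} : Finset (Fin k)) ∈ σ) {P : Finset (Fin k)}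
    (hP : P ∈ σ.erase {c, c + 1}) {a : Fin k} (haP : a ∈ P) : a ≠ c ∧ a ≠ c + 1 := by
  obtain ⟨hne, hPσ⟩ := Finset.mem_erase.mp hP
  constructor
  · rintro rfl
    exact hne (by rw [mem_pair_eq hσ hPσ haP, tau_c hσ hc hpair])
  · rintro rfl
    exact hne (by rw [mem_pair_eq hσ hPσ haP, tau_c1 hσ hc hpair, Finset.pair_comm])

theorem tau_avoid (hσ : IsPairing k σ) (hc : (c : ℕ) + 1 < k)
    (hpair : ({c, c + 1} : Finset (Fin k)) ∈ σ) {a : Fin k} (ha : a ≠ c) (ha' : a ≠ c + 1) :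
    tau σ a ≠ c ∧ tau σ a ≠ c + 1 := by
  constructor
  · intro h
    apply ha'
    rw [← tau_tau hσ a, h, tau_c hσ hc hpair]
  · intro h
    apply ha
    rw [← tau_tau hσ a, h, tau_c1 hσ hc hpair]

theorem pair_mem_erase (hσ : IsPairing k σ) (hc : (c : ℕ) + 1 < k)
    (hpair : ({c, c + 1} : Finset (Fin k)) ∈ σ) {a : Fin k} (ha : a ≠ c) (ha' : a ≠ c + 1) :
    ({a, tau σ a} : Finset (Fin k)) ∈ σ.erase {c, c + 1} := by
  refine Finset.mem_erase.mpr ⟨?_, pair_tau_mem hσ a⟩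
  intro h
  have : a ∈ ({c, c + 1} : Finset (Fin k)) := h ▸ Finset.mem_insert_self _ _
  rcases Finset.mem_insert.mp this with h' | h'
  · exact ha h'
  · exact ha' (Finset.mem_singleton.mp h')

-- values of a, c in ℕ, for rmap/emap lemma reuse
theorem ne_val {a : Fin k} (hc : (c : ℕ) + 1 < k) (ha : a ≠ c) (ha' : a ≠ c + 1) :
    (a : ℕ) ≠ (c : ℕ) ∧ (a : ℕ) ≠ (c : ℕ) + 1 := by
  constructor
  · exact fun h => ha (Fin.ext h)
  · intro h
    exact ha' (Fin.ext (by rw [val_c1 hc, ← h]))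

theorem rmap_inj (hm : m + 2 = k) (hc : (c : ℕ) + 1 < k) {a b : Fin k}
    (ha : a ≠ c) (ha' : a ≠ c + 1) (hb : b ≠ c) (hb' : b ≠ c + 1)
    (h : rmap (m := m) (c : ℕ) a = rmap (c : ℕ) b) : a = b := by
  obtain ⟨h1, h2⟩ := ne_val hc ha ha'
  obtain ⟨h3, h4⟩ := ne_val hc hb hb'
  rw [← emap_rmap hm (c : ℕ) hc a h1 h2, ← emap_rmap hm (c : ℕ) hc b h3 h4, h]

theorem sigma'_pairing (hm : m + 2 = k) (hσ : IsPairing k σ) (hc : (c : ℕ) + 1 < k)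
    (hpair : ({c, c + 1} : Finset (Fin k)) ∈ σ) : IsPairing m (sigma' m σ c) := by
  constructor
  · intro Q hQ
    obtain ⟨P, hP, rfl⟩ := Finset.mem_image.mp hQ
    obtain ⟨a, b, hab, rfl⟩ := Finset.card_eq_two.mp (hσ.1 P (Finset.mem_of_mem_erase hP))
    obtain ⟨ha, ha'⟩ := pair_notin hσ hc hpair hP (Finset.mem_insert_self _ _)
    obtain ⟨hb, hb'⟩ := pair_notin hσ hc hpair hP
      (Finset.mem_insert_of_mem (Finset.mem_singleton_self _))
    rw [Finset.image_insert, Finset.image_singleton]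
    rw [Finset.card_insert_of_notMem, Finset.card_singleton]
    intro hmem
    exact hab (rmap_inj hm hc ha ha' hb hb' (Finset.mem_singleton.mp hmem))
  · intro x
    set a : Fin k := emap (c : ℕ) x with hadef
    obtain ⟨hac, hac'⟩ := emap_ne_c hm (c : ℕ) hc x
    have ha : a ≠ c := fun h => hac (congrArg Fin.val h)
    have ha' : a ≠ c + 1 := fun h => hac' (by rw [← val_c1 hc, ← h])
    have hτ := tau_avoid hσ hc hpair ha ha'
    refine ⟨({rmap (c : ℕ) a, rmap (c : ℕ) (tau σ a)} : Finset (Fin m)), ⟨?_, ?_⟩, ?_⟩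
    · refine Finset.mem_image.mpr ⟨{a, tau σ a}, pair_mem_erase hσ hc hpair ha ha', ?_⟩
      rw [Finset.image_insert, Finset.image_singleton]
    · have : rmap (m := m) (c : ℕ) a = x := rmap_emap hm (c : ℕ) hc x
      rw [this]
      exact Finset.mem_insert_self _ _
    · rintro Q ⟨hQ, hxQ⟩
      obtain ⟨P, hP, rfl⟩ := Finset.mem_image.mp hQ
      obtain ⟨b, hbP, hbx⟩ := Finset.mem_image.mp hxQ
      obtain ⟨hb, hb'⟩ := pair_notin hσ hc hpair hP hbP
      obtain ⟨hb1, hb2⟩ := ne_val hc hb hb'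
      have hba : b = a := by
        rw [hadef, ← hbx, emap_rmap hm (c : ℕ) hc b hb1 hb2]
      subst hba
      rw [mem_pair_eq hσ (Finset.mem_of_mem_erase hP) hbP, Finset.image_insert,
        Finset.image_singleton]

theorem lift_pair (hm : m + 2 = k) (hσ : IsPairing k σ) (hc : (c : ℕ) + 1 < k)
    (hpair : ({c, c + 1} : Finset (Fin k)) ∈ σ) {P : Finset (Fin k)}
    (hP : P ∈ σ.erase {c, c + 1}) {u v : Fin m}
    (hPeq : P.image (rmap (c : ℕ)) = {u, v}) (huv : u ≠ v) :
    ({emap (c : ℕ) u, emap (c : ℕ) v} : Finset (Fin k)) = P := by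
  have hu : ∃ a ∈ P, rmap (m := m) (c : ℕ) a = u :=
    Finset.mem_image.mp (hPeq ▸ Finset.mem_insert_self u {v})
  have hv : ∃ a ∈ P, rmap (m := m) (c : ℕ) a = v :=
    Finset.mem_image.mp (hPeq ▸ Finset.mem_insert_of_mem (Finset.mem_singleton_self v))
  obtain ⟨a, haP, hau⟩ := hu
  obtain ⟨b, hbP, hbv⟩ := hv
  have eback : ∀ x : Fin k, x ∈ P → emap (c : ℕ) (rmap (m := m) (c : ℕ) x) = x := by
    intro x hx
    obtain ⟨h1, h2⟩ := pair_notin hσ hc hpair hP hx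
    obtain ⟨h3, h4⟩ := ne_val hc h1 h2
    exact emap_rmap hm (c : ℕ) hc x h3 h4
  have hea : emap (c : ℕ) u = a := by rw [← hau, eback a haP]
  have heb : emap (c : ℕ) v = b := by rw [← hbv, eback b hbP]
  have hab : a ≠ b := by
    intro h
    rw [h, hbv] at hau
    exact huv hau.symm
  have hPab : P = ({a, b} : Finset (Fin k)) := by
    have hPa := mem_pair_eq hσ (Finset.mem_of_mem_erase hP) haP
    have : b ∈ ({a, tau σ a} : Finset (Fin k)) := hPa ▸ hbP
    rcases Finset.mem_insert.mp this with h' | h'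
    · exact absurd h' hab.symm
    · rw [hPa, Finset.mem_singleton.mp h']
  rw [hea, heb, hPab]

theorem pair_ne_cc1 (hc : (c : ℕ) + 1 < k) {p r : Fin k} (h2 : (p : ℕ) + 2 ≤ (r : ℕ)) :
    ({p, r} : Finset (Fin k)) ≠ {c, c + 1} := by
  intro h
  have hp : p ∈ ({c, c + 1} : Finset (Fin k)) := h ▸ Finset.mem_insert_self _ _
  have hr : r ∈ ({c, c + 1} : Finset (Fin k)) := h ▸
    Finset.mem_insert_of_mem (Finset.mem_singleton_self _)
  have hv1 : (p : ℕ) = (c : ℕ) ∨ (p : ℕ) = (c : ℕ) + 1 := by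
    rcases Finset.mem_insert.mp hp with h' | h'
    · exact Or.inl (congrArg Fin.val h')
    · exact Or.inr (by rw [Finset.mem_singleton.mp h', val_c1 hc])
  have hv2 : (r : ℕ) = (c : ℕ) ∨ (r : ℕ) = (c : ℕ) + 1 := by
    rcases Finset.mem_insert.mp hr with h' | h'
    · exact Or.inl (congrArg Fin.val h')
    · exact Or.inr (by rw [Finset.mem_singleton.mp h', val_c1 hc])
  omega

theorem sigma'_noncross (hm : m + 2 = k) (hσ : IsPairing k σ) (hc : (c : ℕ) + 1 < k)
    (hpair : ({c, c + 1} : Finset (Fin k)) ∈ σ) :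
    NonCrossing k σ ↔ NonCrossing m (sigma' m σ c) := by
  constructor
  · intro h hcross
    apply h
    obtain ⟨p, q, r, s, hpq, hqr, hrs, h1, h2⟩ := hcross
    obtain ⟨P, hP, hPeq⟩ := Finset.mem_image.mp h1
    obtain ⟨Q, hQ, hQeq⟩ := Finset.mem_image.mp h2
    have hpr : p ≠ r := Fin.ne_of_lt (hpq.trans hqr)
    have hqs : q ≠ s := Fin.ne_of_lt (hqr.trans hrs)
    have e1 := lift_pair hm hσ hc hpair hP hPeq hpr
    have e2 := lift_pair hm hσ hc hpair hQ hQeq hqs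
    exact ⟨emap (c : ℕ) p, emap (c : ℕ) q, emap (c : ℕ) r, emap (c : ℕ) s,
      emap_strictMono hm (c : ℕ) hc hpq, emap_strictMono hm (c : ℕ) hc hqr,
      emap_strictMono hm (c : ℕ) hc hrs,
      e1 ▸ Finset.mem_of_mem_erase hP, e2 ▸ Finset.mem_of_mem_erase hQ⟩
  · intro h hcross
    apply h
    obtain ⟨p, q, r, s, hpq, hqr, hrs, h1, h2⟩ := hcross
    have hPer : ({p, r} : Finset (Fin k)) ∈ σ.erase {c, c + 1} :=
      Finset.mem_erase.mpr ⟨pair_ne_cc1 hc (by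
        have := (Fin.lt_def.mp hpq); have := (Fin.lt_def.mp hqr); omega), h1⟩
    have hQer : ({q, s} : Finset (Fin k)) ∈ σ.erase {c, c + 1} :=
      Finset.mem_erase.mpr ⟨pair_ne_cc1 hc (by
        have := (Fin.lt_def.mp hqr); have := (Fin.lt_def.mp hrs); omega), h2⟩
    have np := pair_notin hσ hc hpair hPer (Finset.mem_insert_self _ _)
    have nr := pair_notin hσ hc hpair hPer
      (Finset.mem_insert_of_mem (Finset.mem_singleton_self _))
    have nq := pair_notin hσ hc hpair hQer (Finset.mem_insert_self _ _)
    have ns := pair_notin hσ hc hpair hQer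
      (Finset.mem_insert_of_mem (Finset.mem_singleton_self _))
    obtain ⟨np1, np2⟩ := ne_val hc np.1 np.2
    obtain ⟨nr1, nr2⟩ := ne_val hc nr.1 nr.2
    obtain ⟨nq1, nq2⟩ := ne_val hc nq.1 nq.2
    obtain ⟨ns1, ns2⟩ := ne_val hc ns.1 ns.2
    refine ⟨rmap (c : ℕ) p, rmap (c : ℕ) q, rmap (c : ℕ) r, rmap (c : ℕ) s,
      ?_, ?_, ?_, ?_, ?_⟩
    · exact rmap_strictMono hm (c : ℕ) hc np1 np2 nq1 nq2 (Fin.lt_def.mp hpq)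
    · exact rmap_strictMono hm (c : ℕ) hc nq1 nq2 nr1 nr2 (Fin.lt_def.mp hqr)
    · exact rmap_strictMono hm (c : ℕ) hc nr1 nr2 ns1 ns2 (Fin.lt_def.mp hrs)
    · exact Finset.mem_image.mpr ⟨{p, r}, hPer, by
        rw [Finset.image_insert, Finset.image_singleton]⟩
    · exact Finset.mem_image.mpr ⟨{q, s}, hQer, by
        rw [Finset.image_insert, Finset.image_singleton]⟩
end Reduce2

section Reduce3
set_option linter.unusedSectionVars false
variable {k m : ℕ} [NeZero k] [NeZero m] {σ : Finset (Finset (Fin k))} {c : Fin k}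

theorem val_add_one_of {n : ℕ} [NeZero n] (hn : 2 ≤ n) (t : Fin n) :
    ((t + 1 : Fin n) : ℕ) = if (t : ℕ) + 1 = n then 0 else (t : ℕ) + 1 := by
  rw [Fin.val_add, Fin.val_one', Nat.mod_eq_of_lt hn]
  have := t.isLt
  split
  · rename_i h; rw [h, Nat.mod_self]
  · rw [Nat.mod_eq_of_lt (by omega)]

theorem rmap_succ (hm : m + 2 = k) (hc : (c : ℕ) + 1 < k) (hm2 : 2 ≤ m) (t : Fin k)
    (h1 : (t : ℕ) ≠ (c : ℕ)) (h2 : (t : ℕ) ≠ (c : ℕ) + 1)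
    (h3 : ((t + 1 : Fin k) : ℕ) ≠ (c : ℕ)) (h4 : ((t + 1 : Fin k) : ℕ) ≠ (c : ℕ) + 1) :
    rmap (m := m) (c : ℕ) (t + 1) = rmap (c : ℕ) t + 1 := by
  have hkt := t.isLt
  have hvt1 := val_add_one_of (show 2 ≤ k by omega) t
  have hrt := rmap_val hm (c : ℕ) hc t h1 h2
  have hrt1 := rmap_val hm (c : ℕ) hc (t + 1) h3 h4
  have hrm := (rmap (m := m) (c : ℕ) t).isLt
  ext
  rw [val_add_one_of hm2 (rmap (m := m) (c : ℕ) t), hrt1, hrt, hvt1]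
  rw [hvt1] at h3 h4
  split_ifs at h3 h4 ⊢ <;> omega

theorem rmap_skip (hm : m + 2 = k) (hc : (c : ℕ) + 1 < k) (hm2 : 2 ≤ m) (t : Fin k)
    (h1 : (t : ℕ) ≠ (c : ℕ)) (h2 : (t : ℕ) ≠ (c : ℕ) + 1)
    (h3 : ((t + 1 : Fin k) : ℕ) = (c : ℕ)) :
    rmap (m := m) (c : ℕ) (c + 1 + 1) = rmap (c : ℕ) t + 1 := by
  have hkt := t.isLt
  have hvt1 := val_add_one_of (show 2 ≤ k by omega) t
  have hvc1 := val_c1 hc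
  have hvc2 : ((c + 1 + 1 : Fin k) : ℕ) = if (c : ℕ) + 2 = k then 0 else (c : ℕ) + 2 := by
    rw [val_add_one_of (show 2 ≤ k by omega) (c + 1), hvc1]
  have hc2a : ((c + 1 + 1 : Fin k) : ℕ) ≠ (c : ℕ) := by rw [hvc2]; split_ifs <;> omega
  have hc2b : ((c + 1 + 1 : Fin k) : ℕ) ≠ (c : ℕ) + 1 := by rw [hvc2]; split_ifs <;> omega
  have hrt := rmap_val hm (c : ℕ) hc t h1 h2
  have hrc2 := rmap_val hm (c : ℕ) hc (c + 1 + 1) hc2a hc2b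
  have hrm := (rmap (m := m) (c : ℕ) t).isLt
  ext
  rw [val_add_one_of hm2 (rmap (m := m) (c : ℕ) t), hrc2, hrt, hvc2]
  rw [hvt1] at h3
  split_ifs at h3 ⊢ <;> omega

theorem tau_sigma' (hm : m + 2 = k) (hσ : IsPairing k σ) (hc : (c : ℕ) + 1 < k)
    (hpair : ({c, c + 1} : Finset (Fin k)) ∈ σ) {a : Fin k} (ha : a ≠ c) (ha' : a ≠ c + 1) :
    tau (sigma' m σ c) (rmap (c : ℕ) a) = rmap (c : ℕ) (tau σ a) := by
  have hτ := tau_avoid hσ hc hpair ha ha'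
  have hmem' : ({rmap (c : ℕ) a, rmap (c : ℕ) (tau σ a)} : Finset (Fin m)) ∈ sigma' m σ c := by
    refine Finset.mem_image.mpr ⟨{a, tau σ a}, pair_mem_erase hσ hc hpair ha ha', ?_⟩
    rw [Finset.image_insert, Finset.image_singleton]
  have hne : rmap (m := m) (c : ℕ) (tau σ a) ≠ rmap (c : ℕ) a := by
    intro h
    exact tau_ne hσ a (rmap_inj hm hc hτ.1 hτ.2 ha ha' h)
  exact (eq_tau_of_mem (sigma'_pairing hm hσ hc hpair) hmem' hne).symm

end Reduce3

section Reduce4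
set_option linter.unusedSectionVars false
variable {k m : ℕ} [NeZero k] [NeZero m] {σ : Finset (Finset (Fin k))} {c : Fin k}

theorem card_reduction (hm : m + 2 = k) (hm2 : 2 ≤ m) (hσ : IsPairing k σ)
    (hc : (c : ℕ) + 1 < k) (hpair : ({c, c + 1} : Finset (Fin k)) ∈ σ) :
    Nat.card (Vertices k σ) = Nat.card (Vertices m (sigma' m σ c)) + 1 := by
  classical
  have hσ' : IsPairing m (sigma' m σ c) := sigma'_pairing hm hσ hc hpair
  have hk4 : 4 ≤ k := by omega
  have hvc1 := val_c1 hc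
  have hvc2 : ((c + 1 + 1 : Fin k) : ℕ) = if (c : ℕ) + 2 = k then 0 else (c : ℕ) + 2 := by
    rw [val_add_one_of (show 2 ≤ k by omega) (c + 1), hvc1]
  have hcval := c.isLt
  have hc2c : (c + 1 + 1 : Fin k) ≠ c := by
    intro h; have := congrArg Fin.val h; rw [hvc2] at this; split_ifs at this <;> omega
  have hc2c1 : (c + 1 + 1 : Fin k) ≠ c + 1 := by
    intro h; have := congrArg Fin.val h; rw [hvc2, hvc1] at this; split_ifs at this <;> omega
  have hc1c : (c + 1 : Fin k) ≠ c := c1_ne hc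
  have hcc1' : (c : Fin k) ≠ c + 1 := fun h => hc1c h.symm
  -- the glued vertex c is identified with c+1+1
  have hmkc2 : Quot.mk (glueRel k σ) (c + 1 + 1) = Quot.mk _ c := by
    have := mk_tau_add_one hσ c
    rwa [tau_c hσ hc hpair] at this
  -- forward map
  set F0 : Fin k → Option (Vertices m (sigma' m σ c)) := fun a =>
    if a = c + 1 then none
    else if a = c then some (Quot.mk _ (rmap (c : ℕ) (c + 1 + 1)))
    else some (Quot.mk _ (rmap (c : ℕ) a)) with hF0
  have hstep : ∀ a : Fin k, F0 (tau σ a + 1) = F0 a := by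
    intro a
    by_cases ha1 : a = c + 1
    · rw [ha1, tau_c1 hσ hc hpair]
    by_cases ha0 : a = c
    · rw [ha0, tau_c hσ hc hpair]
      simp only [hF0, if_neg hc2c1, if_neg hc2c, if_neg hcc1', eq_self_iff_true, if_true]
    · have ht := tau_avoid hσ hc hpair ha0 ha1
      have htv := ne_val hc ht.1 ht.2
      have hav := ne_val hc ha0 ha1
      have hb1 : tau σ a + 1 ≠ c + 1 := by
        intro h
        exact ht.1 (add_right_cancel h)
      by_cases hb0 : tau σ a + 1 = c
      · simp only [hF0, if_neg hb1, if_pos hb0, if_neg ha1, if_neg ha0]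
        congr 1
        have h1 : tau (sigma' m σ c) (rmap (c : ℕ) a) = rmap (c : ℕ) (tau σ a) :=
          tau_sigma' hm hσ hc hpair ha0 ha1
        have h2 : rmap (m := m) (c : ℕ) (c + 1 + 1) = rmap (c : ℕ) (tau σ a) + 1 :=
          rmap_skip hm hc hm2 (tau σ a) htv.1 htv.2 (by rw [hb0])
        rw [h2, ← h1]
        exact mk_tau_add_one hσ' (rmap (c : ℕ) a)
      · simp only [hF0, if_neg hb1, if_neg hb0, if_neg ha1, if_neg ha0]
        congr 1
        have hbv := ne_val hc hb0 hb1
        have h1 : tau (sigma' m σ c) (rmap (c : ℕ) a) = rmap (c : ℕ) (tau σ a) :=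
          tau_sigma' hm hσ hc hpair ha0 ha1
        have h2 : rmap (m := m) (c : ℕ) (tau σ a + 1) = rmap (c : ℕ) (tau σ a) + 1 :=
          rmap_succ hm hc hm2 (tau σ a) htv.1 htv.2 hbv.1 hbv.2
        rw [h2, ← h1]
        exact mk_tau_add_one hσ' (rmap (c : ℕ) a)
  have hwF : ∀ a b : Fin k, glueRel k σ a b → F0 a = F0 b := by
    intro a b hab
    rcases (glueRel_iff hσ).mp hab with h | h
    · rw [h, hstep a]
    · rw [h, hstep b]
  -- backward map
  have hstepG : ∀ x : Fin m,
      Quot.mk (glueRel k σ) (emap (c : ℕ) (tau (sigma' m σ c) x + 1)) =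
      Quot.mk (glueRel k σ) (emap (c : ℕ) x) := by
    intro x
    have hex := emap_ne_c hm (c : ℕ) hc x
    have ha0 : emap (c : ℕ) x ≠ c := fun h => hex.1 (congrArg Fin.val h)
    have ha1 : emap (c : ℕ) x ≠ c + 1 := by
      intro h
      exact hex.2 (by rw [← hvc1, ← h])
    have hRa : rmap (m := m) (c : ℕ) (emap (c : ℕ) x) = x := rmap_emap hm (c : ℕ) hc x
    have h1 : tau (sigma' m σ c) x = rmap (c : ℕ) (tau σ (emap (c : ℕ) x)) := by
      rw [← hRa, tau_sigma' hm hσ hc hpair ha0 ha1, hRa]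
    have ht := tau_avoid hσ hc hpair ha0 ha1
    have htv := ne_val hc ht.1 ht.2
    set t : Fin k := tau σ (emap (c : ℕ) x) with htdef
    have hb1 : t + 1 ≠ c + 1 := fun h => ht.1 (add_right_cancel h)
    have hmka : Quot.mk (glueRel k σ) (t + 1) = Quot.mk _ (emap (c : ℕ) x) :=
      mk_tau_add_one hσ (emap (c : ℕ) x)
    by_cases hb0 : t + 1 = c
    · have h2 : rmap (m := m) (c : ℕ) (c + 1 + 1) = rmap (c : ℕ) t + 1 :=
        rmap_skip hm hc hm2 t htv.1 htv.2 (by rw [hb0])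
      rw [h1, ← h2]
      have hc2v := ne_val hc hc2c hc2c1
      rw [emap_rmap hm (c : ℕ) hc _ hc2v.1 hc2v.2, hmkc2]
      rw [hb0] at hmka
      exact hmka
    · have h2 : rmap (m := m) (c : ℕ) (t + 1) = rmap (c : ℕ) t + 1 :=
        rmap_succ hm hc hm2 t htv.1 htv.2 (ne_val hc hb0 hb1).1 (ne_val hc hb0 hb1).2
      rw [h1, ← h2]
      rw [emap_rmap hm (c : ℕ) hc _ (ne_val hc hb0 hb1).1 (ne_val hc hb0 hb1).2, hmka]
  have hwG : ∀ x y : Fin m, glueRel m (sigma' m σ c) x y →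
      Quot.mk (glueRel k σ) (emap (c : ℕ) x) = Quot.mk (glueRel k σ) (emap (c : ℕ) y) := by
    intro x y hxy
    rcases (glueRel_iff hσ').mp hxy with h | h
    · rw [h, hstepG x]
    · rw [h, hstepG y]
  set F : Vertices k σ → Option (Vertices m (sigma' m σ c)) := Quot.lift F0 hwF with hF
  set G : Option (Vertices m (sigma' m σ c)) → Vertices k σ := fun o =>
    Option.elim o (Quot.mk _ (c + 1))
      (Quot.lift (fun x => Quot.mk (glueRel k σ) (emap (c : ℕ) x)) hwG) with hG
  have hleft : ∀ v, G (F v) = v := by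
    apply Quot.ind
    intro a
    by_cases ha1 : a = c + 1
    · subst ha1
      show G (F0 (c + 1)) = _
      simp only [hF0, eq_self_iff_true, if_true, hG, Option.elim]
      exact rfl
    by_cases ha0 : a = c
    · rw [ha0]
      show G (F0 c) = Quot.mk (glueRel k σ) c
      simp only [hF0, if_neg hcc1', eq_self_iff_true, if_true, hG, Option.elim]
      have hc2v := ne_val hc hc2c hc2c1
      rw [emap_rmap hm (c : ℕ) hc _ hc2v.1 hc2v.2, hmkc2]
    · show G (F0 a) = _
      simp only [hF0, if_neg ha1, if_neg ha0, hG, Option.elim]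
      have hav := ne_val hc ha0 ha1
      rw [emap_rmap hm (c : ℕ) hc _ hav.1 hav.2]
  have hright : ∀ o, F (G o) = o := by
    intro o
    cases o with
    | none =>
      show F (Quot.mk _ (c + 1)) = none
      show F0 (c + 1) = none
      simp only [hF0, eq_self_iff_true, if_true]
    | some v =>
      induction v using Quot.ind with
      | mk x =>
        show F0 (emap (c : ℕ) x) = some (Quot.mk _ x)
        have hex := emap_ne_c hm (c : ℕ) hc x
        have ha0 : emap (c : ℕ) x ≠ c := fun h => hex.1 (congrArg Fin.val h)
        have ha1 : emap (c : ℕ) x ≠ c + 1 := by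
          intro h
          exact hex.2 (by rw [← hvc1, ← h])
        simp only [hF0, if_neg ha1, if_neg ha0]
        rw [rmap_emap hm (c : ℕ) hc x]
        exact rfl
  haveI : Finite (Vertices m (sigma' m σ c)) := Quot.finite _
  have hequiv : Vertices k σ ≃ Option (Vertices m (sigma' m σ c)) :=
    ⟨F, G, hleft, hright⟩
  rw [Nat.card_congr hequiv, Finite.card_option]
end Reduce4

theorem base2 (σ : Finset (Finset (Fin 2))) (hσ : IsPairing 2 σ) :
    Nat.card (Vertices 2 σ) = 2 ∧ NonCrossing 2 σ := by
  constructor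
  · have hfin2 : ∀ x y : Fin 2, x ≠ y → x = y + 1 := by decide
    have hfin2' : ∀ a : Fin 2, a + 1 + 1 = a := by decide
    have hrel : ∀ a b : Fin 2, glueRel 2 σ a b → (fun x => x) a = (fun x => x) b := by
      intro a b h
      rcases (glueRel_iff hσ).mp h with h | h
      · have ht : tau σ a = a + 1 := hfin2 _ _ (tau_ne hσ a)
        rw [h, ht, hfin2']
      · have ht : tau σ b = b + 1 := hfin2 _ _ (tau_ne hσ b)
        rw [h, ht, hfin2']
    have e : Vertices 2 σ ≃ Fin 2 :=
      ⟨Quot.lift (fun x => x) hrel, Quot.mk _, by apply Quot.ind; intro a; rfl, fun a => rfl⟩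
    rw [Nat.card_congr e]
    simp [Nat.card_eq_fintype_card]
  · rintro ⟨p, q, r, s, h1, h2, h3, -, -⟩
    have v1 := Fin.lt_def.mp h1
    have v2 := Fin.lt_def.mp h2
    have v3 := Fin.lt_def.mp h3
    have := p.isLt; have := q.isLt; have := r.isLt; have := s.isLt
    omega

theorem main_aux (k : ℕ) : ∀ (hk : 0 < k) (σ : Finset (Finset (Fin k))), IsPairing k σ →
    (letI : NeZero k := ⟨hk.ne'⟩
     Nat.card (Vertices k σ) = k / 2 + 1 ↔ NonCrossing k σ) := by
  induction k using Nat.strong_induction_on with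
  | _ k IH =>
    intro hk σ hσ
    letI : NeZero k := ⟨hk.ne'⟩
    have hkeven := k_even hσ
    by_cases hadj : ∃ c : Fin k, (c : ℕ) + 1 < k ∧ ({c, c + 1} : Finset (Fin k)) ∈ σ
    · obtain ⟨c, hc, hpair⟩ := hadj
      by_cases hk2 : k = 2
      · subst hk2
        obtain ⟨h1, h2⟩ := base2 σ hσ
        rw [h1]
        norm_num
        exact h2
      · have hk4 : 4 ≤ k := by omega
        set m := k - 2 with hmdef
        haveI : NeZero m := ⟨by omega⟩
        have hm : m + 2 = k := by omega
        have h1 := card_reduction hm (by omega) hσ hc hpair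
        have h2 := sigma'_noncross hm hσ hc hpair
        have h3 := sigma'_pairing hm hσ hc hpair
        have hIH := IH m (by omega) (by omega) (sigma' m σ c) h3
        rw [h1, h2, ← hIH]
        omega
    · push_neg at hadj
      have hb := two_mul_card_le hσ hadj
      have hcross := not_noncrossing_of_noadj hσ hadj
      constructor
      · intro hcard
        omega
      · intro h
        exact absurd h hcross


/-- For any pairing `σ` compatible with a sign sequence `ε ∈ {-1,+1}^k`, the quotient
graph `T_σ` is a tree if and only if `σ` is non-crossing.  (The quotient graph is always
connected and has `k/2` edges, so it is a tree exactly when it has `k/2 + 1` vertices.) -/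
theorem quotient_tree_iff_noncrossing (k : ℕ) (hk : 0 < k) (ε : Fin k → ℤ)
    (hval : ∀ i, ε i = 1 ∨ ε i = -1) (σ : Finset (Finset (Fin k))) :
    letI : NeZero k := ⟨hk.ne'⟩
    IsPairing k σ → Compatible k ε σ →
      (Nat.card (Vertices k σ) = k / 2 + 1 ↔ NonCrossing k σ) := by
  intro hσ _
  exact main_aux k hk σ hσ
end

section
/- Let l_1 ≤ ... ≤ l_m be positive integers and L = l_1+...+l_m+1. The set of sequences (a_1,...,a_L) with a_i ∈ {1,...,m} such that for each 1 ≤ n ≤ m-1 at most l_1+...+l_n elements belong to {1,...,n} is in bijection with generalized parking functions: setting ã_r = m+1-a_r, a sequence qualifies if and only if the nondecreasing rearrangement (b_1,...,b_L) of (ã_1,...,ã_L) satisfies b_{1+l_m} ≤ 1, b_{1+l_m+l_{m-1}} ≤ 2, ..., b_{1+l_m+...+l_1} ≤ m. -/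
open Finset

lemma mono_sorted_le_iff {N n : ℕ} {g : Fin N → ℕ} (hg : Monotone g) (p : Fin N) :
    g p ≤ n ↔ (p : ℕ) + 1 ≤ (univ.filter (fun r => g r ≤ n)).card := by
  constructor
  · intro h
    have hsub : Finset.Iic p ⊆ univ.filter (fun r => g r ≤ n) := by
      intro r hr
      simp only [mem_filter, mem_univ, true_and]
      exact le_trans (hg (Finset.mem_Iic.mp hr)) h
    calc (p : ℕ) + 1 = (Finset.Iic p).card := (Fin.card_Iic p).symm
      _ ≤ _ := Finset.card_le_card hsub
  · intro h
    by_contra hc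
    push_neg at hc
    have hsub : univ.filter (fun r => g r ≤ n) ⊆ Finset.Iio p := by
      intro r hr
      simp only [mem_filter, mem_univ, true_and] at hr
      rw [Finset.mem_Iio]
      by_contra hrp
      push_neg at hrp
      exact absurd (le_trans (hg hrp) hr) (not_le.mpr hc)
    have := Finset.card_le_card hsub
    rw [Fin.card_Iio] at this
    omega

lemma card_filter_perm {N : ℕ} (σ : Equiv.Perm (Fin N)) (p : Fin N → Prop) [DecidablePred p] :
    (univ.filter (fun r => p (σ r))).card = (univ.filter p).card := by
  apply Finset.card_bij (fun r _ => σ r)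
  · intro r hr; simp only [mem_filter, mem_univ, true_and] at hr ⊢; exact hr
  · intro r1 _ r2 _ h; exact σ.injective h
  · intro b hb
    simp only [mem_filter, mem_univ, true_and] at hb
    exact ⟨σ.symm b, by simp [hb], by simp⟩

/-- Let `l_1 ≤ ⋯ ≤ l_m` be positive integers and `L = l_1 + ⋯ + l_m + 1`.  A sequence
`(a_1, …, a_L)` with values in `{1, …, m}` (encoded as `Fin m`, `a k` meaning value
`(a k) + 1`) has at most `l_1 + ⋯ + l_n` entries in `{1, …, n}` for each `1 ≤ n ≤ m-1`
if and only if it is a generalized parking function: setting `ã_r = m + 1 - a_r`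
(encoded as `m - (a r : ℕ) ∈ {1, …, m}`), the nondecreasing rearrangement
`(b_1, …, b_L)` of `(ã_1, …, ã_L)` satisfies `b_{1 + l_m} ≤ 1`,
`b_{1 + l_m + l_{m-1}} ≤ 2`, …, `b_{1 + l_m + ⋯ + l_1} ≤ m`. -/
theorem parking_function_characterization (m : ℕ) (hm : 1 ≤ m) (l : Fin m → ℕ)
    (hpos : ∀ i, 0 < l i) (hmono : Monotone l)
    (a : Fin ((∑ i, l i) + 1) → Fin m) :
    (∀ n : ℕ, 1 ≤ n → n ≤ m - 1 →
      (univ.filter (fun k => (a k : ℕ) < n)).card ≤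
        ∑ i ∈ univ.filter (fun i : Fin m => (i : ℕ) < n), l i) ↔
    (∀ n : ℕ, 1 ≤ n → n ≤ m →
      (fun r => m - (a r : ℕ))
        ((Tuple.sort (fun r => m - (a r : ℕ)))
          ⟨∑ j ∈ univ.filter (fun j : Fin m => m - n ≤ (j : ℕ)), l j,
            Nat.lt_succ_of_le (Finset.sum_le_sum_of_subset (Finset.filter_subset _ _))⟩) ≤
        n) := by
  set f : Fin ((∑ i, l i) + 1) → ℕ := fun r => m - (a r : ℕ) with hf
  have hmonog : Monotone (f ∘ ⇑(Tuple.sort f)) := Tuple.monotone_sort f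
  -- key equivalence for each n ≤ m
  have key : ∀ (n : ℕ) (hn : n ≤ m),
      (f ((Tuple.sort f)
          ⟨∑ j ∈ univ.filter (fun j : Fin m => m - n ≤ (j : ℕ)), l j,
            Nat.lt_succ_of_le (Finset.sum_le_sum_of_subset (Finset.filter_subset _ _))⟩) ≤ n) ↔
      (univ.filter (fun k => (a k : ℕ) < m - n)).card ≤
        ∑ i ∈ univ.filter (fun i : Fin m => (i : ℕ) < m - n), l i := by
    intro n hn
    rw [show f ((Tuple.sort f) _) = (f ∘ ⇑(Tuple.sort f)) _ from rfl,
      mono_sorted_le_iff hmonog]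
    have hperm : (univ.filter (fun r => (f ∘ ⇑(Tuple.sort f)) r ≤ n)).card
        = (univ.filter (fun r => f r ≤ n)).card :=
      card_filter_perm (Tuple.sort f) (fun r => f r ≤ n)
    have hcompl : (univ.filter (fun r => f r ≤ n)).card
        = (∑ i, l i) + 1 - (univ.filter (fun k => (a k : ℕ) < m - n)).card := by
      have h1 : univ.filter (fun r => f r ≤ n)
          = univ.filter (fun r : Fin ((∑ i, l i) + 1) => ¬ ((a r : ℕ) < m - n)) := by
        apply Finset.filter_congr
        intro r _
        have : (a r : ℕ) < m := (a r).isLt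
        simp only [hf]
        constructor <;> intro h <;> omega
      have h2 := Finset.card_filter_add_card_filter_not
        (s := (univ : Finset (Fin ((∑ i, l i) + 1)))) (fun k => (a k : ℕ) < m - n)
      rw [h1]
      simp only [Finset.card_univ, Fintype.card_fin] at h2
      omega
    have hsum : ∑ i ∈ univ.filter (fun i : Fin m => (i : ℕ) < m - n), l i
        + ∑ j ∈ univ.filter (fun j : Fin m => m - n ≤ (j : ℕ)), l j = ∑ i, l i := by
      have := Finset.sum_filter_add_sum_filter_not (univ : Finset (Fin m))
        (fun i : Fin m => (i : ℕ) < m - n) l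
      rw [← this]
      congr 1
      apply Finset.sum_congr _ (fun _ _ => rfl)
      apply Finset.filter_congr
      intro j _
      simp [not_lt]
    have hcardle : (univ.filter (fun k => (a k : ℕ) < m - n)).card ≤ (∑ i, l i) + 1 := by
      calc _ ≤ (univ : Finset (Fin ((∑ i, l i) + 1))).card := Finset.card_filter_le _ _
        _ = (∑ i, l i) + 1 := by simp
    rw [hperm, hcompl]
    simp only [Fin.val_mk]
    omega
  constructor
  · intro H n hn1 hnm
    rw [key n hnm]
    by_cases h0 : m - n = 0
    · simp [h0]
    · exact H (m - n) (by omega) (by omega)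
  · intro H n hn1 hnm
    have h := (key (m - n) (by omega)).mp (H (m - n) (by omega) (by omega))
    rwa [show m - (m - n) = n by omega] at h
end
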